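/- arXiv:2010.09027 — 4 statements merged into one kernel-verified Lean document; each statement's English description precedes it below -/
import Mathlib

section
/- Let g be a volume-preserving diffeomorphism of ℝ³ and let v, w : ℝ³ → ℝ³ be smooth compactly supported vector fields. Then the cross-helicity is invariant under simultaneous pullback: ∫_{ℝ³} ⟨(Dg(x))ᵀ v(g(x)), curl(x ↦ (Dg(x))ᵀ w(g(x)))(x)⟩ dx = ∫_{ℝ³} ⟨v(x), (curl w)(x)⟩ dx. -/
open MeasureTheory Matrix

noncomputable section

/-- Vector fields on ℝ³ modeled as functions `Fin 3 → ℝ`. -/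
abbrev V3 := Fin 3 → ℝ

/-- Partial derivative `∂ᵢ f` of a scalar function. -/
noncomputable def pd (i : Fin 3) (f : V3 → ℝ) (x : V3) : ℝ :=
  fderiv ℝ f x (Pi.single i 1)

/-- Curl of a vector field on ℝ³. -/
noncomputable def vcurl (v : V3 → V3) (x : V3) : V3 :=
  ![pd 1 (fun y => v y 2) x - pd 2 (fun y => v y 1) x,
    pd 2 (fun y => v y 0) x - pd 0 (fun y => v y 2) x,
    pd 0 (fun y => v y 1) x - pd 1 (fun y => v y 0) x]

/-- Divergence of a vector field on ℝ³. -/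
noncomputable def vdiv (v : V3 → V3) (x : V3) : ℝ :=
  pd 0 (fun y => v y 0) x + pd 1 (fun y => v y 1) x + pd 2 (fun y => v y 2) x

/-- Jacobian matrix `Dg(x)` of a map `g : ℝ³ → ℝ³`, `(jac g x) i j = ∂ⱼ gⁱ (x)`. -/
noncomputable def jac (g : V3 → V3) (x : V3) : Matrix (Fin 3) (Fin 3) ℝ :=
  fun i j => pd j (fun y => g y i) x

/-- Euclidean inner product on ℝ³. -/
def dot (a b : V3) : ℝ := ∑ i, a i * b i

/-- Helicity of a vector field. -/
noncomputable def Hel (v : V3 → V3) : ℝ := ∫ x : V3, dot (v x) (vcurl v x)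

lemma pd_contDiff {f : V3 → ℝ} (hf : ContDiff ℝ (⊤ : ℕ∞) f) (i : Fin 3) :
    ContDiff ℝ (⊤ : ℕ∞) (pd i f) :=
  (hf.fderiv_right (by simp)).clm_apply contDiff_const

lemma fderiv_pi_apply {G : V3 → V3} {x : V3} (hG : DifferentiableAt ℝ G x) (u : V3) (i : Fin 3) :
    fderiv ℝ (fun y => G y i) x u = (fderiv ℝ G x u) i := by
  have h := (ContinuousLinearMap.proj (R := ℝ) (φ := fun _ : Fin 3 => ℝ) i).hasFDerivAt.comp x
    hG.hasFDerivAt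
  have h' : HasFDerivAt (fun y => G y i)
      ((ContinuousLinearMap.proj (R := ℝ) (φ := fun _ : Fin 3 => ℝ) i).comp (fderiv ℝ G x)) x := h
  rw [h'.fderiv]; rfl

lemma pd_mul {a b : V3 → ℝ} {x : V3} (ha : DifferentiableAt ℝ a x)
    (hb : DifferentiableAt ℝ b x) (j : Fin 3) :
    pd j (fun y => a y * b y) x = pd j a x * b x + a x * pd j b x := by
  unfold pd
  rw [fderiv_fun_mul ha hb]
  simp [mul_comm]
  ring

lemma pd_sum {ι : Type*} {s : Finset ι} {F : ι → V3 → ℝ} {x : V3}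
    (h : ∀ k ∈ s, DifferentiableAt ℝ (F k) x) (j : Fin 3) :
    pd j (fun y => ∑ k ∈ s, F k y) x = ∑ k ∈ s, pd j (F k) x := by
  unfold pd
  rw [fderiv_fun_sum h]
  simp

lemma clm_apply_eq_sum (φ : V3 →L[ℝ] ℝ) (c : V3) :
    φ c = ∑ l, c l * φ (Pi.single l 1) := by
  have : c = ∑ l, c l • (Pi.single l 1 : V3) := by
    ext m; simp [Pi.single_apply]
  conv_lhs => rw [this]
  simp [map_sum]

lemma pd_comp {f : V3 → ℝ} {G : V3 → V3} {x : V3} (hf : DifferentiableAt ℝ f (G x))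
    (hG : DifferentiableAt ℝ G x) (j : Fin 3) :
    pd j (fun y => f (G y)) x = ∑ l, pd l f (G x) * pd j (fun y => G y l) x := by
  unfold pd
  have h := (hf.hasFDerivAt.comp x hG.hasFDerivAt)
  have h' : HasFDerivAt (fun y => f (G y)) ((fderiv ℝ f (G x)).comp (fderiv ℝ G x)) x := h
  rw [h'.fderiv, ContinuousLinearMap.comp_apply,
    clm_apply_eq_sum (fderiv ℝ f (G x)) (fderiv ℝ G x (Pi.single j 1))]
  refine Finset.sum_congr rfl fun l _ => ?_
  rw [mul_comm, fderiv_pi_apply hG]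

lemma pd_pd_symm {f : V3 → ℝ} (hf : ContDiff ℝ (⊤ : ℕ∞) f) (i j : Fin 3) (x : V3) :
    pd i (fun y => pd j f y) x = pd j (fun y => pd i f y) x := by
  have hder : ∀ y, HasFDerivAt f (fderiv ℝ f y) y :=
    fun y => (hf.differentiable (by simp) y).hasFDerivAt
  have hF : ContDiff ℝ (⊤ : ℕ∞) (fderiv ℝ f) := hf.fderiv_right (by simp)
  have hF' : HasFDerivAt (fderiv ℝ f) (fderiv ℝ (fderiv ℝ f) x) x :=
    (hF.differentiable (by simp) x).hasFDerivAt
  have key : ∀ a b : Fin 3, pd a (fun y => pd b f y) x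
      = (fderiv ℝ (fderiv ℝ f) x (Pi.single a 1)) (Pi.single b 1) := by
    intro a b
    have h2 := ((ContinuousLinearMap.apply ℝ ℝ ((Pi.single b 1 : V3))).hasFDerivAt.comp x hF')
    have : pd a (fun y => pd b f y) x
        = fderiv ℝ (fun y => (ContinuousLinearMap.apply ℝ ℝ ((Pi.single b 1 : V3)))
            (fderiv ℝ f y)) x (Pi.single a 1) := rfl
    have h3 : HasFDerivAt (fun y => (ContinuousLinearMap.apply ℝ ℝ ((Pi.single b 1 : V3)))
        (fderiv ℝ f y))
        (((ContinuousLinearMap.apply ℝ ℝ) ((Pi.single b 1 : V3))).comp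
          (fderiv ℝ (fderiv ℝ f) x)) x := h2
    rw [this, h3.fderiv]; rfl
  rw [key, key, second_derivative_symmetric hder hF' _ _]

lemma pullback_pointwise (g : V3 → V3) (hg : ContDiff ℝ (⊤ : ℕ∞) g) (v w : V3 → V3)
    (hw : ContDiff ℝ (⊤ : ℕ∞) w) (x : V3) :
    dot (((jac g x)ᵀ).mulVec (v (g x)))
        (vcurl (fun y => ((jac g y)ᵀ).mulVec (w (g y))) x)
      = (jac g x).det * dot (v (g x)) (vcurl w (g x)) := by
  have hgk : ∀ k, ContDiff ℝ (⊤ : ℕ∞) (fun y => g y k) := fun k => contDiff_pi.1 hg k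
  have hwk : ∀ k, ContDiff ℝ (⊤ : ℕ∞) (fun y => w y k) := fun k => contDiff_pi.1 hw k
  have hA : ∀ k i, ContDiff ℝ (⊤ : ℕ∞) (pd i (fun z => g z k)) := fun k i => pd_contDiff (hgk k) i
  have hu : ∀ i j : Fin 3, pd j (fun y => ((jac g y)ᵀ).mulVec (w (g y)) i) x =
      ∑ k, (pd j (pd i (fun z => g z k)) x * w (g x) k
        + pd i (fun z => g z k) x
          * ∑ l, pd l (fun z => w z k) (g x) * pd j (fun z => g z l) x) := by
    intro i j
    have hfun : (fun y => ((jac g y)ᵀ).mulVec (w (g y)) i)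
        = fun y => ∑ k, pd i (fun z => g z k) y * w (g y) k := by
      funext y; simp [jac, Matrix.mulVec, Matrix.transpose_apply, dotProduct]
    have hdiffs : ∀ k ∈ Finset.univ, DifferentiableAt ℝ
        (fun y => pd i (fun z => g z k) y * w (g y) k) x :=
      fun k _ => (((hA k i).differentiable (by simp) x).mul
        (((hwk k).comp hg).differentiable (by simp) x))
    rw [hfun, pd_sum hdiffs j]
    refine Finset.sum_congr rfl fun k _ => ?_
    have hb : DifferentiableAt ℝ (fun y => w (g y) k) x := by
      exact ((hwk k).comp hg).differentiable (by simp) x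
    have hcomp : pd j (fun y => w (g y) k) x
        = ∑ l, pd l (fun z => w z k) (g x) * pd j (fun z => g z l) x := by
      exact pd_comp ((hwk k).differentiable (by simp) (g x)) (hg.differentiable (by simp) x) j
    rw [pd_mul ((hA k i).differentiable (by simp) x) hb j, hcomp]
  have hsymm : ∀ k (i j : Fin 3), pd j (pd i (fun z => g z k)) x
      = pd i (pd j (fun z => g z k)) x := fun k i j => pd_pd_symm (hgk k) j i x
  simp only [dot, vcurl, Fin.sum_univ_three, Matrix.cons_val_zero, Matrix.cons_val_one,
    Matrix.head_cons, Matrix.cons_val_two, Matrix.tail_cons]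
  rw [hu 2 1, hu 1 2, hu 0 2, hu 2 0, hu 1 0, hu 0 1]
  simp only [Fin.sum_univ_three]
  rw [hsymm 0 2 1, hsymm 1 2 1, hsymm 2 2 1,
    hsymm 0 2 0, hsymm 1 2 0, hsymm 2 2 0,
    hsymm 0 1 0, hsymm 1 1 0, hsymm 2 1 0]
  simp only [jac, Matrix.mulVec, Matrix.transpose_apply, dotProduct, Matrix.det_fin_three,
    Fin.sum_univ_three]
  ring

theorem cross_helicity_pullback_invariant (g ginv : V3 → V3)
    (hg : ContDiff ℝ (⊤ : ℕ∞) g) (hginv : ContDiff ℝ (⊤ : ℕ∞) ginv)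
    (hleft : Function.LeftInverse ginv g) (hright : Function.RightInverse ginv g)
    (hvol : ∀ x, (jac g x).det = 1)
    (v w : V3 → V3) (hv : ContDiff ℝ (⊤ : ℕ∞) v) (hw : ContDiff ℝ (⊤ : ℕ∞) w)
    (hvsupp : HasCompactSupport v) (hwsupp : HasCompactSupport w) :
    ∫ x : V3, dot (((jac g x)ᵀ).mulVec (v (g x)))
        (vcurl (fun y => ((jac g y)ᵀ).mulVec (w (g y))) x)
      = ∫ x : V3, dot (v x) (vcurl w x) := by
  have hgdiff : Differentiable ℝ g := hg.differentiable (by simp)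
  have hdet : ∀ x : V3, (fderiv ℝ g x).det = (jac g x).det := by
    intro x
    have hm : LinearMap.toMatrix' ((fderiv ℝ g x : V3 →L[ℝ] V3) : V3 →ₗ[ℝ] V3) = jac g x := by
      ext i j
      rw [LinearMap.toMatrix'_apply]
      have hsingle : (fun j' => if j' = j then (1:ℝ) else 0) = Pi.single j 1 := by
        funext m; simp [Pi.single_apply]
      show (fderiv ℝ g x (Pi.single j 1)) i = jac g x i j
      rw [← fderiv_pi_apply (hgdiff x)]
      rfl
    rw [ContinuousLinearMap.det, ← LinearMap.det_toMatrix', hm]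
  have hcov : ∀ (f : V3 → ℝ), (∫ x : V3, f (g x)) = ∫ x : V3, f x := by
    intro f
    have h1 := MeasureTheory.integral_image_eq_integral_abs_det_fderiv_smul
      (volume : Measure V3) MeasurableSet.univ
      (fun x _ => (hgdiff x).hasFDerivAt.hasFDerivWithinAt)
      (hleft.injective.injOn) f
    rw [Set.image_univ, hright.surjective.range_eq] at h1
    simp only [MeasureTheory.setIntegral_univ, hdet, hvol, abs_one, one_smul] at h1
    exact h1.symm
  have hpt : ∀ x : V3, dot (((jac g x)ᵀ).mulVec (v (g x)))
      (vcurl (fun y => ((jac g y)ᵀ).mulVec (w (g y))) x)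
      = (fun z => dot (v z) (vcurl w z)) (g x) := by
    intro x
    rw [pullback_pointwise g hg v w hw x, hvol x, one_mul]
  simp only [hpt]
  exact hcov (fun z => dot (v z) (vcurl w z))
end
end

section
/- Let v, w : ℝ³ → ℝ³ be smooth compactly supported vector fields. Then the Biot–Savart operator is symmetric with respect to the L² pairing: ∫_{ℝ³} ⟨BS(v)(x), w(x)⟩ dx = ∫_{ℝ³} ⟨v(x), BS(w)(x)⟩ dx. -/
open MeasureTheory Matrix

noncomputable section

/-- Euclidean norm on ℝ³ (as `Fin 3 → ℝ`). -/
noncomputable def enorm3 (x : V3) : ℝ := Real.sqrt (∑ i, x i ^ 2)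

/-- The Biot–Savart operator:
`BS(w)(x) = (1/4π) ∫ w(y) × (x − y) / |x − y|³ dy`. -/
noncomputable def BS (w : V3 → V3) (x : V3) : V3 :=
  (4 * Real.pi)⁻¹ • ∫ y : V3, (enorm3 (x - y) ^ 3)⁻¹ • (w y ⨯₃ (x - y))

lemma enorm3_nonneg (x : V3) : 0 ≤ enorm3 x := Real.sqrt_nonneg _

lemma continuous_enorm3 : Continuous enorm3 := by
  unfold enorm3
  exact Real.continuous_sqrt.comp (continuous_finset_sum _ fun i _ => (continuous_apply i).pow 2)

lemma enorm3_neg (z : V3) : enorm3 (-z) = enorm3 z := by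
  unfold enorm3; congr 1; apply Finset.sum_congr rfl; intro i _; simp

lemma norm_le_enorm3 (d : V3) : ‖d‖ ≤ enorm3 d := by
  unfold enorm3
  rw [pi_norm_le_iff_of_nonneg (Real.sqrt_nonneg _)]
  intro i
  rw [Real.norm_eq_abs, ← Real.sqrt_sq_eq_abs]
  exact Real.sqrt_le_sqrt (Finset.single_le_sum (fun j _ => sq_nonneg (d j)) (Finset.mem_univ i))

lemma norm_cross_le (u d : V3) : ‖u ⨯₃ d‖ ≤ 2 * ‖u‖ * ‖d‖ := by
  have hb : ∀ (a : V3) (i : Fin 3), |a i| ≤ ‖a‖ := fun a i => by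
    simpa [Real.norm_eq_abs] using norm_le_pi_norm a i
  have hn : ∀ (a : V3), (0:ℝ) ≤ ‖a‖ := fun a => norm_nonneg a
  have key : ∀ a b c e : ℝ, |a| ≤ ‖u‖ → |b| ≤ ‖d‖ → |c| ≤ ‖u‖ → |e| ≤ ‖d‖ →
      ‖a * b - c * e‖ ≤ 2 * ‖u‖ * ‖d‖ := by
    intro a b c e ha hb' hc he
    rw [Real.norm_eq_abs]
    calc |a * b - c * e| ≤ |a| * |b| + |c| * |e| := by
          rw [← abs_mul, ← abs_mul]; exact abs_sub _ _
      _ ≤ 2 * ‖u‖ * ‖d‖ := by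
          nlinarith [mul_le_mul ha hb' (abs_nonneg b) (hn u),
            mul_le_mul hc he (abs_nonneg e) (hn u)]
  rw [pi_norm_le_iff_of_nonneg (by positivity)]
  intro i
  fin_cases i
  · simpa [cross_apply] using key (u 1) (d 2) (u 2) (d 1) (hb u 1) (hb d 2) (hb u 2) (hb d 1)
  · simpa [cross_apply] using key (u 2) (d 0) (u 0) (d 2) (hb u 2) (hb d 0) (hb u 0) (hb d 2)
  · simpa [cross_apply] using key (u 0) (d 1) (u 1) (d 0) (hb u 0) (hb d 1) (hb u 1) (hb d 0)
lemma kernel_bound (u d : V3) :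
    ‖(enorm3 d ^ 3)⁻¹ • (u ⨯₃ d)‖ ≤ 2 * ‖u‖ * (‖d‖ ^ 2)⁻¹ := by
  rcases eq_or_ne d 0 with rfl | hd
  · have : u ⨯₃ (0 : V3) = 0 := by
      ext i; fin_cases i <;> simp [cross_apply]
    simp [this]
  · have hdn : (0:ℝ) < ‖d‖ := norm_pos_iff.mpr hd
    have he : ‖d‖ ≤ enorm3 d := norm_le_enorm3 d
    have hepos : (0:ℝ) < enorm3 d := lt_of_lt_of_le hdn he
    rw [norm_smul, Real.norm_eq_abs, abs_of_nonneg (by positivity)]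
    have h1 : (enorm3 d ^ 3)⁻¹ ≤ (‖d‖ ^ 3)⁻¹ := by
      apply inv_anti₀ (by positivity)
      exact pow_le_pow_left₀ hdn.le he 3
    calc (enorm3 d ^ 3)⁻¹ * ‖u ⨯₃ d‖ ≤ (‖d‖ ^ 3)⁻¹ * (2 * ‖u‖ * ‖d‖) :=
          mul_le_mul h1 (norm_cross_le u d) (norm_nonneg _) (by positivity)
      _ = 2 * ‖u‖ * (‖d‖ ^ 2)⁻¹ := by field_simp

lemma abs_dot_le (u a : V3) : |dot u a| ≤ 3 * ‖u‖ * ‖a‖ := by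
  have hb : ∀ (b : V3) (i : Fin 3), |b i| ≤ ‖b‖ := fun b i => by
    simpa [Real.norm_eq_abs] using norm_le_pi_norm b i
  have hn : ∀ (b : V3), (0:ℝ) ≤ ‖b‖ := fun b => norm_nonneg b
  have h : ∀ i : Fin 3, |u i * a i| ≤ ‖u‖ * ‖a‖ := fun i => by
    rw [abs_mul]; exact mul_le_mul (hb u i) (hb a i) (abs_nonneg _) (hn u)
  calc |dot u a| = |u 0 * a 0 + u 1 * a 1 + u 2 * a 2| := by
        simp [dot, Fin.sum_univ_three]
    _ ≤ |u 0 * a 0| + |u 1 * a 1| + |u 2 * a 2| := by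
        exact (abs_add_le _ _).trans (by gcongr; exact abs_add_le _ _)
    _ ≤ 3 * ‖u‖ * ‖a‖ := by nlinarith [h 0, h 1, h 2]

lemma cont_cross : Continuous fun p : V3 × V3 => p.1 ⨯₃ p.2 := by
  apply continuous_pi
  intro i
  fin_cases i <;> simp [cross_apply] <;> fun_prop
open Set in
lemma finite_lintegral_inv_sq_ball (R : ℝ) :
    ∫⁻ z in Metric.ball (0:V3) R, ENNReal.ofReal ((‖z‖ ^ 2)⁻¹) < ⊤ := by
  have hmeas : Measurable fun z : V3 => (‖z‖ ^ 2)⁻¹ := (measurable_norm.pow_const 2).inv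
  set μ := (volume : Measure V3).restrict (Metric.ball 0 R) with hμ
  rw [show ∫⁻ z in Metric.ball (0:V3) R, ENNReal.ofReal ((‖z‖ ^ 2)⁻¹) =
      ∫⁻ z, ENNReal.ofReal ((‖z‖ ^ 2)⁻¹) ∂μ from rfl,
    lintegral_eq_lintegral_meas_le μ (Filter.Eventually.of_forall fun x => by positivity)
      hmeas.aemeasurable]
  calc ∫⁻ t in Ioi 0, μ {a : V3 | t ≤ (‖a‖ ^ 2)⁻¹}
      ≤ ∫⁻ t in Ioc 0 1 ∪ Ioi 1, μ {a : V3 | t ≤ (‖a‖ ^ 2)⁻¹} :=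
        lintegral_mono_set Ioi_subset_Ioc_union_Ioi
    _ ≤ (∫⁻ t in Ioc 0 1, μ {a : V3 | t ≤ (‖a‖ ^ 2)⁻¹}) +
        ∫⁻ t in Ioi 1, μ {a : V3 | t ≤ (‖a‖ ^ 2)⁻¹} := lintegral_union_le _ _ _
    _ < ⊤ := by
        apply ENNReal.add_lt_top.2
        constructor
        · calc (∫⁻ t in Ioc 0 1, μ {a : V3 | t ≤ (‖a‖ ^ 2)⁻¹})
              ≤ ∫⁻ _ in Ioc (0:ℝ) 1, volume (Metric.ball (0:V3) R) := by
                apply lintegral_mono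
                intro t
                calc μ {a : V3 | t ≤ (‖a‖ ^ 2)⁻¹} ≤ μ univ := measure_mono (subset_univ _)
                  _ = volume (Metric.ball (0:V3) R) := by rw [hμ, Measure.restrict_apply_univ]
            _ < ⊤ := by
                rw [setLIntegral_const]
                exact ENNReal.mul_lt_top measure_ball_lt_top (by simp)
        · have hsub : ∀ t ∈ Ioi (1:ℝ), μ {a : V3 | t ≤ (‖a‖ ^ 2)⁻¹} ≤
              ENNReal.ofReal (t ^ (-(3/2) : ℝ)) * volume (Metric.ball (0:V3) 1) := by
            intro t ht
            have ht0 : (0:ℝ) < t := lt_trans one_pos ht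
            have hsub' : {a : V3 | t ≤ (‖a‖ ^ 2)⁻¹} ⊆
                Metric.closedBall 0 (Real.sqrt t⁻¹) := by
              intro a ha
              simp only [mem_setOf_eq] at ha
              have hna : (0:ℝ) < ‖a‖ := by
                by_contra h
                push_neg at h
                have : ‖a‖ = 0 := le_antisymm h (norm_nonneg a)
                rw [this] at ha
                norm_num at ha
                linarith
              have h2 : ‖a‖ ^ 2 ≤ t⁻¹ := by
                rw [← inv_inv (‖a‖ ^ 2)]
                exact inv_anti₀ ht0 ha
              rw [Metric.mem_closedBall, dist_zero_right]
              rw [show (Real.sqrt t⁻¹) = Real.sqrt t⁻¹ from rfl]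
              exact (Real.le_sqrt (norm_nonneg a) (by positivity)).2 h2
            calc μ {a : V3 | t ≤ (‖a‖ ^ 2)⁻¹}
                ≤ volume (Metric.closedBall (0:V3) (Real.sqrt t⁻¹)) :=
                  le_trans (Measure.restrict_le_self _) (measure_mono hsub')
              _ = ENNReal.ofReal ((Real.sqrt t⁻¹) ^ (Module.finrank ℝ V3)) *
                    volume (Metric.ball (0:V3) 1) :=
                  Measure.addHaar_closedBall _ _ (Real.sqrt_nonneg _)
              _ = ENNReal.ofReal (t ^ (-(3/2) : ℝ)) * volume (Metric.ball (0:V3) 1) := by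
                  congr 2
                  · have hfr : Module.finrank ℝ V3 = 3 := by
                      simp [Module.finrank_fin_fun]
                    rw [hfr, Real.sqrt_eq_rpow, ← Real.rpow_natCast (t⁻¹ ^ ((1:ℝ)/2)) 3,
                      ← Real.rpow_mul (by positivity), Real.inv_rpow ht0.le,
                      ← Real.rpow_neg ht0.le]
                    norm_num
          calc ∫⁻ t in Ioi 1, μ {a : V3 | t ≤ (‖a‖ ^ 2)⁻¹}
              ≤ ∫⁻ t in Ioi 1, ENNReal.ofReal (t ^ (-(3/2) : ℝ)) *
                  volume (Metric.ball (0:V3) 1) := by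
                rw [setLIntegral_congr_fun measurableSet_Ioi (fun t ht => rfl)]
                exact setLIntegral_mono' measurableSet_Ioi hsub
            _ = (∫⁻ t in Ioi 1, ENNReal.ofReal (t ^ (-(3/2) : ℝ))) *
                  volume (Metric.ball (0:V3) 1) :=
                lintegral_mul_const' _ _ measure_ball_lt_top.ne
            _ < ⊤ := by
                apply ENNReal.mul_lt_top _ measure_ball_lt_top
                have hint : IntegrableOn (fun t : ℝ => t ^ (-(3/2) : ℝ)) (Ioi 1) :=
                  integrableOn_Ioi_rpow_of_lt (by norm_num) one_pos
                have h2 := hint.2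
                rw [hasFiniteIntegral_iff_norm] at h2
                refine lt_of_le_of_lt (lintegral_mono fun t => ?_) h2
                exact ENNReal.ofReal_le_ofReal (le_abs_self _)
lemma integrable_g (R : ℝ) :
    Integrable (Set.indicator (Metric.ball (0:V3) R) (fun z => (‖z‖ ^ 2)⁻¹)) := by
  rw [integrable_indicator_iff measurableSet_ball]
  constructor
  · exact ((measurable_norm.pow_const 2).inv).aestronglyMeasurable.restrict
  · rw [hasFiniteIntegral_iff_norm]
    refine lt_of_le_of_lt (lintegral_mono fun z => ?_) (finite_lintegral_inv_sq_ball R)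
    exact ENNReal.ofReal_le_ofReal (by rw [Real.norm_eq_abs, abs_of_nonneg (by positivity)])

lemma g_nonneg (R : ℝ) (z : V3) :
    0 ≤ Set.indicator (Metric.ball (0:V3) R) (fun z => (‖z‖ ^ 2)⁻¹) z :=
  Set.indicator_nonneg (fun z _ => by positivity) z

/-- Pointwise domination of the Biot–Savart kernel. -/
lemma kern_dom (v : V3 → V3) (C r R : ℝ) (hC : ∀ y, ‖v y‖ ≤ C)
    (hsupp : tsupport v ⊆ Metric.closedBall 0 r) (x y : V3) (hxR : ‖x‖ + r < R) :
    ‖(enorm3 (x - y) ^ 3)⁻¹ • (v y ⨯₃ (x - y))‖ ≤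
      2 * C * Set.indicator (Metric.ball (0:V3) R) (fun z => (‖z‖ ^ 2)⁻¹) (x - y) := by
  have hC0 : 0 ≤ C := le_trans (norm_nonneg _) (hC 0)
  by_cases hy : y ∈ tsupport v
  · have hyr : ‖y‖ ≤ r := by
      have := hsupp hy
      rwa [Metric.mem_closedBall, dist_zero_right] at this
    have hmem : x - y ∈ Metric.ball (0:V3) R := by
      rw [Metric.mem_ball, dist_zero_right]
      calc ‖x - y‖ ≤ ‖x‖ + ‖y‖ := norm_sub_le _ _
        _ ≤ ‖x‖ + r := by linarith
        _ < R := hxR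
    rw [Set.indicator_of_mem hmem]
    calc ‖(enorm3 (x - y) ^ 3)⁻¹ • (v y ⨯₃ (x - y))‖ ≤ 2 * ‖v y‖ * (‖x - y‖ ^ 2)⁻¹ :=
          kernel_bound _ _
      _ ≤ 2 * C * (‖x - y‖ ^ 2)⁻¹ := by
          have : (0:ℝ) ≤ (‖x - y‖ ^ 2)⁻¹ := by positivity
          nlinarith [hC y]
  · have hv0 : v y = 0 := image_eq_zero_of_notMem_tsupport hy
    have : v y ⨯₃ (x - y) = 0 := by
      rw [hv0]; ext i; fin_cases i <;> simp [cross_apply]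
    rw [this, smul_zero, norm_zero]
    have := g_nonneg R (x - y)
    positivity

/-- For each `x`, the Biot–Savart integrand is integrable in `y`. -/
lemma integrable_kern (v : V3 → V3) (hv : Continuous v) (hs : HasCompactSupport v) (x : V3) :
    Integrable (fun y => (enorm3 (x - y) ^ 3)⁻¹ • (v y ⨯₃ (x - y))) := by
  obtain ⟨C, hC⟩ := hs.exists_bound_of_continuous hv
  obtain ⟨r, hr⟩ : ∃ r, tsupport v ⊆ Metric.closedBall 0 r := by
    obtain ⟨r, hr⟩ := hs.isBounded.subset_closedBall 0
    exact ⟨r, hr⟩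
  have hC0 : 0 ≤ C := le_trans (norm_nonneg _) (hC 0)
  set R := ‖x‖ + r + 1 with hR
  have hmeasg : Measurable fun d : V3 => (enorm3 d ^ 3)⁻¹ :=
    ((continuous_enorm3.pow 3).measurable).inv
  have hmeas : AEStronglyMeasurable
      (fun y => (enorm3 (x - y) ^ 3)⁻¹ • (v y ⨯₃ (x - y))) volume := by
    apply Measurable.aestronglyMeasurable
    apply Measurable.fun_smul
    · exact hmeasg.comp (measurable_const.sub measurable_id)
    · exact (cont_cross.comp (hv.prodMk (continuous_const.sub continuous_id))).measurable
  apply Integrable.mono' (((integrable_g R).comp_sub_left x).const_mul (2 * C)) hmeas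
  filter_upwards with y
  exact kern_dom v C r R hC hr x y (by rw [hR]; linarith)
/-- `dot (·) a` as a continuous linear map. -/
def la (a : V3) : V3 →L[ℝ] ℝ :=
  ∑ i, a i • (ContinuousLinearMap.proj i : V3 →L[ℝ] ℝ)

lemma la_apply (a u : V3) : la a u = dot u a := by
  simp [la, dot, ContinuousLinearMap.sum_apply, mul_comm]

lemma dot_smul_left (c : ℝ) (u a : V3) : dot (c • u) a = c * dot u a := by
  simp [dot, Finset.mul_sum, mul_assoc]

/-- Step 1: integral representation of the pairing. -/
lemma BS_dot (v : V3 → V3) (hv : Continuous v) (hs : HasCompactSupport v) (a x : V3) :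
    dot (BS v x) a =
      (4 * Real.pi)⁻¹ * ∫ y, dot ((enorm3 (x - y) ^ 3)⁻¹ • (v y ⨯₃ (x - y))) a := by
  unfold BS
  rw [dot_smul_left]
  congr 1
  rw [← la_apply, ← ContinuousLinearMap.integral_comp_comm _ (integrable_kern v hv hs x)]
  simp only [la_apply]
lemma dot_comm (a b : V3) : dot a b = dot b a := by
  simp [dot, mul_comm]

lemma dot_zero_right (a : V3) : dot a 0 = 0 := by simp [dot]

lemma kern_symm (v w : V3 → V3) (x y : V3) :
    dot ((enorm3 (x - y) ^ 3)⁻¹ • (w y ⨯₃ (x - y))) (v x)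
      = dot ((enorm3 (y - x) ^ 3)⁻¹ • (v x ⨯₃ (y - x))) (w y) := by
  have h : enorm3 (y - x) = enorm3 (x - y) := by rw [← neg_sub x y, enorm3_neg]
  rw [h, dot_smul_left, dot_smul_left]
  congr 1
  simp only [dot, cross_apply, Fin.sum_univ_three, Pi.sub_apply,
    Matrix.cons_val_zero, Matrix.cons_val_one, Matrix.head_cons, Matrix.cons_val_two,
    Matrix.tail_cons]
  ring

lemma integrable_F (v w : V3 → V3)
    (hv : Continuous v) (hvs : HasCompactSupport v)
    (hw : Continuous w) (hws : HasCompactSupport w) :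
    Integrable
      (fun p : V3 × V3 => dot ((enorm3 (p.1 - p.2) ^ 3)⁻¹ • (v p.2 ⨯₃ (p.1 - p.2))) (w p.1))
      ((volume : Measure V3).prod volume) := by
  obtain ⟨Cv, hCv⟩ := hvs.exists_bound_of_continuous hv
  have hCv0 : 0 ≤ Cv := le_trans (norm_nonneg _) (hCv 0)
  obtain ⟨rv, hrv⟩ := hvs.isBounded.subset_closedBall 0
  obtain ⟨rw', hrw⟩ := hws.isBounded.subset_closedBall 0
  have hrw0 : ∀ x ∈ tsupport w, ‖x‖ ≤ rw' := fun x hx => by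
    have := hrw hx; rwa [Metric.mem_closedBall, dist_zero_right] at this
  set R : ℝ := rv + rw' + 1 with hRdef
  set g := Set.indicator (Metric.ball (0:V3) R) (fun z => (‖z‖ ^ 2)⁻¹) with hgdef
  set Ig : ℝ := ∫ z : V3, g z with hIg
  have hIg0 : 0 ≤ Ig := integral_nonneg (g_nonneg R)
  have hmeasg : Measurable fun d : V3 => (enorm3 d ^ 3)⁻¹ :=
    ((continuous_enorm3.pow 3).measurable).inv
  have hk : Measurable fun p : V3 × V3 =>
      (enorm3 (p.1 - p.2) ^ 3)⁻¹ • (v p.2 ⨯₃ (p.1 - p.2)) := by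
    apply Measurable.fun_smul
    · exact hmeasg.comp (measurable_fst.sub measurable_snd)
    · exact (cont_cross.comp ((hv.comp continuous_snd).prodMk
        (continuous_fst.sub continuous_snd))).measurable
  have hmeasF : AEStronglyMeasurable
      (fun p : V3 × V3 => dot ((enorm3 (p.1 - p.2) ^ 3)⁻¹ • (v p.2 ⨯₃ (p.1 - p.2))) (w p.1))
      ((volume : Measure V3).prod volume) := by
    apply Measurable.aestronglyMeasurable
    unfold dot
    apply Finset.measurable_sum
    intro i _
    exact ((measurable_pi_apply i).comp hk).mul
      (((continuous_apply i).comp (hw.comp continuous_fst)).measurable)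
  rw [integrable_prod_iff hmeasF]
  constructor
  · filter_upwards with x
    simpa only [la_apply] using
      (la (w x)).integrable_comp (integrable_kern v hv hvs x)
  · apply Integrable.mono'
      (((hw.norm).integrable_of_hasCompactSupport hws.norm).const_mul (6 * Cv * Ig))
      (hmeasF.norm.integral_prod_right')
    filter_upwards with x
    rw [Real.norm_eq_abs, abs_of_nonneg (integral_nonneg fun y => norm_nonneg _)]
    by_cases hx : x ∈ tsupport w
    · have hxR : ‖x‖ + rv < R := by
        have := hrw0 x hx; rw [hRdef]; linarith
      calc ∫ y, ‖dot ((enorm3 (x - y) ^ 3)⁻¹ • (v y ⨯₃ (x - y))) (w x)‖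
          ≤ ∫ y, (3 * ‖w x‖) * ‖(enorm3 (x - y) ^ 3)⁻¹ • (v y ⨯₃ (x - y))‖ := by
            apply integral_mono_of_nonneg
              (Filter.Eventually.of_forall fun y => norm_nonneg _)
              (((integrable_kern v hv hvs x).norm).const_mul (3 * ‖w x‖))
            filter_upwards with y
            rw [Real.norm_eq_abs]
            calc |dot ((enorm3 (x - y) ^ 3)⁻¹ • (v y ⨯₃ (x - y))) (w x)|
                ≤ 3 * ‖(enorm3 (x - y) ^ 3)⁻¹ • (v y ⨯₃ (x - y))‖ * ‖w x‖ := abs_dot_le _ _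
              _ = (3 * ‖w x‖) * ‖(enorm3 (x - y) ^ 3)⁻¹ • (v y ⨯₃ (x - y))‖ := by ring
        _ = (3 * ‖w x‖) * ∫ y, ‖(enorm3 (x - y) ^ 3)⁻¹ • (v y ⨯₃ (x - y))‖ :=
            integral_const_mul _ _
        _ ≤ (3 * ‖w x‖) * (2 * Cv * Ig) := by
            apply mul_le_mul_of_nonneg_left _ (by positivity)
            calc ∫ y, ‖(enorm3 (x - y) ^ 3)⁻¹ • (v y ⨯₃ (x - y))‖
                ≤ ∫ y, (2 * Cv) * g (x - y) := by
                  apply integral_mono_of_nonneg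
                    (Filter.Eventually.of_forall fun y => norm_nonneg _)
                    (((integrable_g R).comp_sub_left x).const_mul (2 * Cv))
                  filter_upwards with y
                  exact kern_dom v Cv rv R hCv hrv x y hxR
              _ = (2 * Cv) * ∫ y, g (x - y) := integral_const_mul _ _
              _ = (2 * Cv) * Ig := by rw [integral_sub_left_eq_self g volume x]
        _ = 6 * Cv * Ig * ‖w x‖ := by ring
    · have hwx : w x = 0 := image_eq_zero_of_notMem_tsupport hx
      simp [hwx, dot_zero_right]
theorem biot_savart_symmetric (v w : V3 → V3)
    (hv : ContDiff ℝ (⊤ : ℕ∞) v) (hvsupp : HasCompactSupport v)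
    (hw : ContDiff ℝ (⊤ : ℕ∞) w) (hwsupp : HasCompactSupport w) :
    ∫ x : V3, dot (BS v x) (w x) = ∫ x : V3, dot (v x) (BS w x) := by
  have hvc : Continuous v := hv.continuous
  have hwc : Continuous w := hw.continuous
  set F : V3 × V3 → ℝ := fun p =>
    dot ((enorm3 (p.1 - p.2) ^ 3)⁻¹ • (v p.2 ⨯₃ (p.1 - p.2))) (w p.1) with hFdef
  have hF : Integrable F ((volume : Measure V3).prod volume) :=
    integrable_F v w hvc hvsupp hwc hwsupp
  have h1 : ∀ x, dot (BS v x) (w x) = (4 * Real.pi)⁻¹ * ∫ y, F (x, y) := fun x => by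
    rw [BS_dot v hvc hvsupp (w x) x]
  have h2 : ∀ x, dot (v x) (BS w x) = (4 * Real.pi)⁻¹ * ∫ y, F (y, x) := fun x => by
    rw [dot_comm, BS_dot w hwc hwsupp (v x) x]
    congr 1
    apply integral_congr_ae
    filter_upwards with y
    simp only [hFdef]
    exact kern_symm v w x y
  have hswap : (∫ x, ∫ y, F (y, x)) = ∫ y, ∫ x, F (y, x) :=
    integral_integral_swap (f := fun x y => F (y, x)) hF.swap
  calc ∫ x : V3, dot (BS v x) (w x)
      = ∫ x, (4 * Real.pi)⁻¹ * ∫ y, F (x, y) := by simp only [h1]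
    _ = (4 * Real.pi)⁻¹ * ∫ x, ∫ y, F (x, y) := integral_const_mul _ _
    _ = (4 * Real.pi)⁻¹ * ∫ x, ∫ y, F (y, x) := by rw [hswap]
    _ = ∫ x : V3, dot (v x) (BS w x) := by
        rw [← integral_const_mul]
        simp only [h2]
end
end

section
/- Let u : ℝ × ℝ³ → ℝ³ and p : ℝ × ℝ³ → ℝ be smooth, with u(t,·) divergence-free for every t, satisfying the incompressible Euler equation ∂u/∂t = −(u·∇)u − ∇p. Assume that for every t the functions u(t,·) and p(t,·) are Schwartz-class, uniformly on compact time intervals (so that all integrals below converge and differentiation under the integral sign is justified). Then the helicity is conserved: for all t, ∫_{ℝ³} ⟨u(t,x), (curl u(t,·))(x)⟩ dx = ∫_{ℝ³} ⟨u(0,x), (curl u(0,·))(x)⟩ dx. -/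
open MeasureTheory Matrix ContDiff

noncomputable section

/-- Gradient of a scalar function on ℝ³. -/
noncomputable def grad (f : V3 → ℝ) (x : V3) : V3 := fun i => pd i f x

/-- Directional derivative `(X·∇)Y`. -/
noncomputable def covD (X Y : V3 → V3) (x : V3) : V3 :=
  fun i => ∑ j, X x j * pd j (fun y => Y y i) x

/-- The operator `(∇ᵀX)Y`, with i-th component `Σ_j (∂_i X^j) Y^j`. -/
noncomputable def gradT (X Y : V3 → V3) (x : V3) : V3 :=
  fun i => ∑ j, pd i (fun y => X y j) x * Y x j

/-- Componentwise Laplacian of a vector field. -/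
noncomputable def lapl (v : V3 → V3) (x : V3) : V3 :=
  fun i => ∑ j, pd j (fun y => pd j (fun z => v z i) y) x

/-- Time derivative `∂u/∂t` of a time-dependent vector field. -/
noncomputable def dtv (u : ℝ → V3 → V3) (t : ℝ) (x : V3) : V3 :=
  fun i => deriv (fun s => u s x i) t
namespace EHAux

section generic
variable {E : Type*} [NormedAddCommGroup E] [NormedSpace ℝ E]

lemma smooth_fderiv_apply {f : E → ℝ} (hf : ContDiff ℝ ∞ f) (v : E) :
    ContDiff ℝ ∞ (fun x => fderiv ℝ f x v) :=
  (hf.fderiv_right (by simp)).clm_apply contDiff_const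

lemma diff_of_smooth {f : E → ℝ} (hf : ContDiff ℝ ∞ f) : Differentiable ℝ f :=
  hf.differentiable (by decide)

lemma fderiv_fderiv_apply {f : E → ℝ} (hf : ContDiff ℝ ∞ f) (v w : E) (x : E) :
    fderiv ℝ (fun y => fderiv ℝ f y w) x v = fderiv ℝ (fderiv ℝ f) x v w := by
  have hd : DifferentiableAt ℝ (fderiv ℝ f) x :=
    ((hf.fderiv_right (m := 1) (by decide)).differentiable one_ne_zero).differentiableAt
  have h2 : fderiv ℝ (fun y => fderiv ℝ f y w) x
      = (ContinuousLinearMap.apply ℝ ℝ w).comp (fderiv ℝ (fderiv ℝ f) x) :=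
    ((ContinuousLinearMap.apply ℝ ℝ w).hasFDerivAt.comp x hd.hasFDerivAt).fderiv
  rw [h2]; rfl

lemma fderiv_apply_comm {f : E → ℝ} (hf : ContDiff ℝ ∞ f) (v w : E) (x : E) :
    fderiv ℝ (fun y => fderiv ℝ f y w) x v = fderiv ℝ (fun y => fderiv ℝ f y v) x w := by
  rw [fderiv_fderiv_apply hf v w x, fderiv_fderiv_apply hf w v x]
  exact hf.contDiffAt.isSymmSndFDerivAt (by rw [minSmoothness_of_isRCLikeNormedField]; exact WithTop.coe_le_coe.mpr le_top) v w

end generic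

/-! ### Directional derivatives on the joint space `ℝ × V3` -/

def Dv (v : ℝ × V3) (f : ℝ × V3 → ℝ) : ℝ × V3 → ℝ := fun q => fderiv ℝ f q v

def sv (i : Fin 3) : ℝ × V3 := (0, Pi.single i 1)

def tvec : ℝ × V3 := (1, 0)

lemma Dv_smooth {f : ℝ × V3 → ℝ} (hf : ContDiff ℝ ∞ f) (v : ℝ × V3) :
    ContDiff ℝ ∞ (Dv v f) := smooth_fderiv_apply hf v

lemma Dv_comm {f : ℝ × V3 → ℝ} (hf : ContDiff ℝ ∞ f) (v w : ℝ × V3) :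
    Dv v (Dv w f) = Dv w (Dv v f) :=
  funext fun q => fderiv_apply_comm hf v w q

lemma Dv_mul_fun {f g : ℝ × V3 → ℝ} (hf : ContDiff ℝ ∞ f) (hg : ContDiff ℝ ∞ g) (v : ℝ × V3) :
    Dv v (fun q => f q * g q) = fun q => Dv v f q * g q + f q * Dv v g q := by
  funext q
  have h := ((diff_of_smooth hf q).hasFDerivAt.fun_mul (diff_of_smooth hg q).hasFDerivAt).fderiv
  show fderiv ℝ (fun q => f q * g q) q v = _
  rw [h]
  simp only [ContinuousLinearMap.add_apply, ContinuousLinearMap.smul_apply, smul_eq_mul, Dv]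
  ring

lemma Dv_add_fun {f g : ℝ × V3 → ℝ} (hf : ContDiff ℝ ∞ f) (hg : ContDiff ℝ ∞ g) (v : ℝ × V3) :
    Dv v (fun q => f q + g q) = fun q => Dv v f q + Dv v g q := by
  funext q
  show fderiv ℝ (fun q => f q + g q) q v = _
  rw [fderiv_fun_add (diff_of_smooth hf q) (diff_of_smooth hg q)]
  rfl

lemma Dv_sub_fun {f g : ℝ × V3 → ℝ} (hf : ContDiff ℝ ∞ f) (hg : ContDiff ℝ ∞ g) (v : ℝ × V3) :
    Dv v (fun q => f q - g q) = fun q => Dv v f q - Dv v g q := by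
  funext q
  show fderiv ℝ (fun q => f q - g q) q v = _
  rw [fderiv_fun_sub (diff_of_smooth hf q) (diff_of_smooth hg q)]
  rfl

lemma Dv_neg_fun {f : ℝ × V3 → ℝ} (v : ℝ × V3) :
    Dv v (fun q => -f q) = fun q => -Dv v f q := by
  funext q
  show fderiv ℝ (fun q => -f q) q v = _
  rw [fderiv_fun_neg]
  rfl

/-! ### Slices -/

lemma contDiff_slice {f : ℝ × V3 → ℝ} (hf : ContDiff ℝ ∞ f) (t : ℝ) :
    ContDiff ℝ ∞ (fun y => f (t, y)) :=
  hf.comp (contDiff_const.prodMk contDiff_id)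

lemma pd_slice {f : ℝ × V3 → ℝ} (hf : ContDiff ℝ ∞ f) (i : Fin 3) (t : ℝ) (x : V3) :
    pd i (fun y => f (t, y)) x = Dv (sv i) f (t, x) := by
  have hins : HasFDerivAt (fun y : V3 => (t, y))
      ((0 : V3 →L[ℝ] ℝ).prod (ContinuousLinearMap.id ℝ V3)) x :=
    (hasFDerivAt_const t x).prodMk (hasFDerivAt_id x)
  have h : HasFDerivAt (fun y => f (t, y))
      ((fderiv ℝ f (t, x)).comp ((0 : V3 →L[ℝ] ℝ).prod (ContinuousLinearMap.id ℝ V3))) x :=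
    (diff_of_smooth hf (t, x)).hasFDerivAt.comp x hins
  show fderiv ℝ (fun y => f (t, y)) x (Pi.single i 1) = _
  rw [h.fderiv]
  simp [Dv, sv]

lemma hasDerivAt_slice {f : ℝ × V3 → ℝ} (hf : ContDiff ℝ ∞ f) (t : ℝ) (x : V3) :
    HasDerivAt (fun s => f (s, x)) (Dv tvec f (t, x)) t := by
  have hins : HasFDerivAt (fun s : ℝ => (s, x))
      ((ContinuousLinearMap.id ℝ ℝ).prod (0 : ℝ →L[ℝ] V3)) t :=
    (hasFDerivAt_id t).prodMk (hasFDerivAt_const x t)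
  have h : HasFDerivAt (fun s : ℝ => f (s, x))
      ((fderiv ℝ f (t, x)).comp ((ContinuousLinearMap.id ℝ ℝ).prod (0 : ℝ →L[ℝ] V3))) t :=
    (diff_of_smooth hf (t, x)).hasFDerivAt.comp t hins
  have := h.hasDerivAt
  simpa [Dv, tvec] using this

/-! ### Decay -/

def Decays (g : ℝ × V3 → ℝ) : Prop :=
  ∀ (R : ℝ) (k : ℕ), ∃ C : ℝ, ∀ s ∈ Set.Icc (-R) R, ∀ x : V3, ‖x‖ ^ k * |g (s, x)| ≤ C

lemma Decays.add {f g : ℝ × V3 → ℝ} (hf : Decays f) (hg : Decays g) :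
    Decays (fun q => f q + g q) := by
  intro R k
  obtain ⟨C1, h1⟩ := hf R k
  obtain ⟨C2, h2⟩ := hg R k
  refine ⟨C1 + C2, fun s hs x => ?_⟩
  calc ‖x‖ ^ k * |f (s, x) + g (s, x)| ≤ ‖x‖ ^ k * (|f (s, x)| + |g (s, x)|) := by
        gcongr
        exact abs_add_le _ _
    _ = ‖x‖ ^ k * |f (s, x)| + ‖x‖ ^ k * |g (s, x)| := by ring
    _ ≤ C1 + C2 := add_le_add (h1 s hs x) (h2 s hs x)

lemma Decays.neg {f : ℝ × V3 → ℝ} (hf : Decays f) : Decays (fun q => -f q) := by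
  intro R k
  obtain ⟨C1, h1⟩ := hf R k
  exact ⟨C1, fun s hs x => by simpa [abs_neg] using h1 s hs x⟩

lemma Decays.sub {f g : ℝ × V3 → ℝ} (hf : Decays f) (hg : Decays g) :
    Decays (fun q => f q - g q) := by
  have := hf.add hg.neg
  simpa [sub_eq_add_neg] using this

lemma Decays.mul {f g : ℝ × V3 → ℝ} (hf : Decays f) (hg : Decays g) :
    Decays (fun q => f q * g q) := by
  intro R k
  obtain ⟨C1, h1⟩ := hf R k
  obtain ⟨C2, h2⟩ := hg R 0
  refine ⟨C1 * C2, fun s hs x => ?_⟩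
  have e1 := h1 s hs x
  have e2 := h2 s hs x
  simp only [pow_zero, one_mul] at e2
  calc ‖x‖ ^ k * |f (s, x) * g (s, x)| = (‖x‖ ^ k * |f (s, x)|) * |g (s, x)| := by
        rw [abs_mul]; ring
    _ ≤ C1 * C2 := mul_le_mul e1 e2 (abs_nonneg _) (le_trans (by positivity) e1)

lemma Decays.exists_bound {g : ℝ × V3 → ℝ} (hg : Decays g) (R : ℝ) :
    ∃ b : V3 → ℝ, Integrable b ∧ ∀ s ∈ Set.Icc (-R) R, ∀ x : V3, |g (s, x)| ≤ b x := by
  have hfr : ((Module.finrank ℝ V3 : ℝ)) < (4 : ℝ) := by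
    simp [Module.finrank_fintype_fun_eq_card]
    norm_num
  rcases lt_or_ge R 0 with hR | hR
  · refine ⟨fun _ => 0, integrable_zero _ _ _, fun s hs x => absurd (le_trans hs.1 hs.2) ?_⟩
    linarith
  · obtain ⟨C0, h0⟩ := hg R 0
    obtain ⟨C4, h4⟩ := hg R 4
    refine ⟨fun x => (16 * (C0 + C4)) * (1 + ‖x‖) ^ (-(4 : ℝ)),
      (integrable_one_add_norm hfr).const_mul _, fun s hs x => ?_⟩
    have hP : (0 : ℝ) < (1 + ‖x‖) ^ (4 : ℕ) := by positivity
    have e0 := h0 s hs x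
    have e4 := h4 s hs x
    simp only [pow_zero, one_mul] at e0
    have hpow : (1 + ‖x‖) ^ (4 : ℕ) ≤ 16 * (1 + ‖x‖ ^ 4) := by
      nlinarith [norm_nonneg x, sq_nonneg (‖x‖ - 1), sq_nonneg (‖x‖ ^ 2 - 1),
        sq_nonneg (‖x‖ ^ 2 - ‖x‖), sq_nonneg ‖x‖]
    have key : |g (s, x)| * (1 + ‖x‖) ^ (4 : ℕ) ≤ 16 * (C0 + C4) := by
      calc |g (s, x)| * (1 + ‖x‖) ^ (4 : ℕ) ≤ |g (s, x)| * (16 * (1 + ‖x‖ ^ 4)) :=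
            mul_le_mul_of_nonneg_left hpow (abs_nonneg _)
        _ = 16 * (|g (s, x)| + ‖x‖ ^ 4 * |g (s, x)|) := by ring
        _ ≤ 16 * (C0 + C4) := by linarith
    have hrw : (1 + ‖x‖) ^ (-(4 : ℝ)) = ((1 + ‖x‖) ^ (4 : ℕ))⁻¹ := by
      rw [show (-(4 : ℝ)) = -((4 : ℕ) : ℝ) by norm_num, Real.rpow_neg (by positivity),
        Real.rpow_natCast]
    show |g (s, x)| ≤ 16 * (C0 + C4) * (1 + ‖x‖) ^ (-(4 : ℝ))
    rw [hrw, ← div_eq_mul_inv, le_div_iff₀ hP]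
    exact key

lemma Decays.integrable {g : ℝ × V3 → ℝ} (hg : Decays g) (hc : Continuous g) (s : ℝ) :
    Integrable (fun x : V3 => g (s, x)) := by
  obtain ⟨b, hbi, hb⟩ := hg.exists_bound |s|
  have hs : s ∈ Set.Icc (-|s|) |s| := ⟨neg_abs_le s, le_abs_self s⟩
  refine hbi.mono' ((hc.comp (Continuous.prodMk continuous_const continuous_id)).aestronglyMeasurable) ?_
  filter_upwards with x
  rw [Real.norm_eq_abs]
  exact hb s hs x

end EHAux

namespace EHAux

section bounds

lemma abs_pd_le {f : V3 → ℝ} (i : Fin 3) (x : V3) :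
    |pd i f x| ≤ ‖iteratedFDeriv ℝ 1 f x‖ := by
  have h : pd i f x = iteratedFDeriv ℝ 1 f x ![Pi.single i 1] := by
    rw [iteratedFDeriv_one_apply]; rfl
  rw [h, ← Real.norm_eq_abs]
  refine (ContinuousMultilinearMap.le_opNorm _ _).trans ?_
  simp [Pi.norm_single]

lemma abs_pd_pd_le {f : V3 → ℝ} (hf : ContDiff ℝ ∞ f) (i j : Fin 3) (x : V3) :
    |pd i (pd j f) x| ≤ ‖iteratedFDeriv ℝ 2 f x‖ := by
  have h1 : pd i (pd j f) x = fderiv ℝ (fderiv ℝ f) x (Pi.single i 1) (Pi.single j 1) :=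
    fderiv_fderiv_apply hf _ _ x
  have h2 : fderiv ℝ (fderiv ℝ f) x (Pi.single i 1) (Pi.single j 1)
      = iteratedFDeriv ℝ 2 f x ![Pi.single i 1, Pi.single j 1] := by
    rw [iteratedFDeriv_two_apply]
    simp
  rw [h1, h2, ← Real.norm_eq_abs]
  refine (ContinuousMultilinearMap.le_opNorm _ _).trans ?_
  simp [Fin.prod_univ_two, Pi.norm_single]

lemma norm_iFD_proj_le (f : V3 → V3) (hf : ContDiff ℝ ∞ f) (i : Fin 3) (n : ℕ) (x : V3) :
    ‖iteratedFDeriv ℝ n (fun y => f y i) x‖ ≤ ‖iteratedFDeriv ℝ n f x‖ := by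
  have hproj : ‖(ContinuousLinearMap.proj i : V3 →L[ℝ] ℝ)‖ ≤ 1 :=
    ContinuousLinearMap.opNorm_le_bound _ zero_le_one fun y => by
      simpa using norm_le_pi_norm y i
  have hco : (fun y => f y i) = (ContinuousLinearMap.proj i : V3 →L[ℝ] ℝ) ∘ f := rfl
  rw [hco, ContinuousLinearMap.iteratedFDeriv_comp_left _ (x := x) hf.contDiffAt (by exact_mod_cast le_top)]
  refine (ContinuousLinearMap.norm_compContinuousMultilinearMap_le _ _).trans ?_
  exact mul_le_of_le_one_left (norm_nonneg _) hproj

end bounds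

/-! ### Joint functions and base decay facts -/

def UU (u : ℝ → V3 → V3) (i : Fin 3) : ℝ × V3 → ℝ := fun q => u q.1 q.2 i

def PP (p : ℝ → V3 → ℝ) : ℝ × V3 → ℝ := fun q => p q.1 q.2

section withU

variable {u : ℝ → V3 → V3} {p : ℝ → V3 → ℝ}

lemma UU_smooth (hu : ContDiff ℝ (⊤ : ℕ∞) fun q : ℝ × V3 => u q.1 q.2) (i : Fin 3) :
    ContDiff ℝ ∞ (UU u i) :=
  (contDiff_pi.mp (hu.of_le (by simp))) i

lemma PP_smooth (hp : ContDiff ℝ (⊤ : ℕ∞) fun q : ℝ × V3 => p q.1 q.2) :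
    ContDiff ℝ ∞ (PP p) := hp.of_le (by simp)

lemma u_slice_smooth (hu : ContDiff ℝ (⊤ : ℕ∞) fun q : ℝ × V3 => u q.1 q.2) (t : ℝ) :
    ContDiff ℝ ∞ (u t) :=
  (hu.of_le (by simp)).comp (contDiff_const.prodMk contDiff_id)

lemma u_slice_comp_smooth (hu : ContDiff ℝ (⊤ : ℕ∞) fun q : ℝ × V3 => u q.1 q.2) (t : ℝ) (i : Fin 3) :
    ContDiff ℝ ∞ (fun y => u t y i) :=
  contDiff_pi.mp (u_slice_smooth hu t) i

lemma p_slice_smooth (hp : ContDiff ℝ (⊤ : ℕ∞) fun q : ℝ × V3 => p q.1 q.2) (t : ℝ) :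
    ContDiff ℝ ∞ (p t) :=
  (hp.of_le (by simp)).comp (contDiff_const.prodMk contDiff_id)

variable (hudecay : ∀ (R : ℝ) (k n : ℕ), ∃ C : ℝ, ∀ t ∈ Set.Icc (-R) R, ∀ x : V3,
      ‖x‖ ^ k * ‖iteratedFDeriv ℝ n (u t) x‖ ≤ C)
variable (hpdecay : ∀ (R : ℝ) (k n : ℕ), ∃ C : ℝ, ∀ t ∈ Set.Icc (-R) R, ∀ x : V3,
      ‖x‖ ^ k * ‖iteratedFDeriv ℝ n (p t) x‖ ≤ C)
variable (hu : ContDiff ℝ (⊤ : ℕ∞) fun q : ℝ × V3 => u q.1 q.2)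
variable (hp : ContDiff ℝ (⊤ : ℕ∞) fun q : ℝ × V3 => p q.1 q.2)

include hudecay in
lemma decays_UU (i : Fin 3) : Decays (UU u i) := by
  intro R k
  obtain ⟨C, hC⟩ := hudecay R k 0
  refine ⟨C, fun s hs x => ?_⟩
  have h2 : |UU u i (s, x)| ≤ ‖u s x‖ := by
    simpa [UU] using norm_le_pi_norm (u s x) i
  calc ‖x‖ ^ k * |UU u i (s, x)| ≤ ‖x‖ ^ k * ‖u s x‖ := by gcongr
    _ = ‖x‖ ^ k * ‖iteratedFDeriv ℝ 0 (u s) x‖ := by rw [norm_iteratedFDeriv_zero]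
    _ ≤ C := hC s hs x

include hu hudecay in
lemma decays_DUU (i j : Fin 3) : Decays (Dv (sv j) (UU u i)) := by
  intro R k
  obtain ⟨C, hC⟩ := hudecay R k 1
  refine ⟨C, fun s hs x => ?_⟩
  have e1 : Dv (sv j) (UU u i) (s, x) = pd j (fun y => u s y i) x :=
    (pd_slice (UU_smooth hu i) j s x).symm
  have h2 : |Dv (sv j) (UU u i) (s, x)| ≤ ‖iteratedFDeriv ℝ 1 (u s) x‖ := by
    rw [e1]
    exact (abs_pd_le j x).trans (norm_iFD_proj_le (u s) (u_slice_smooth hu s) i 1 x)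
  calc ‖x‖ ^ k * |Dv (sv j) (UU u i) (s, x)| ≤ ‖x‖ ^ k * ‖iteratedFDeriv ℝ 1 (u s) x‖ := by gcongr
    _ ≤ C := hC s hs x

include hu hudecay in
lemma decays_DDUU (i j l : Fin 3) : Decays (Dv (sv l) (Dv (sv j) (UU u i))) := by
  intro R k
  obtain ⟨C, hC⟩ := hudecay R k 2
  refine ⟨C, fun s hs x => ?_⟩
  have e0 : (fun y => Dv (sv j) (UU u i) (s, y)) = pd j (fun y => u s y i) := by
    funext y
    exact (pd_slice (UU_smooth hu i) j s y).symm
  have e1 : Dv (sv l) (Dv (sv j) (UU u i)) (s, x) = pd l (pd j (fun y => u s y i)) x := by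
    rw [← pd_slice (Dv_smooth (UU_smooth hu i) (sv j)) l s x, e0]
  have h2 : |Dv (sv l) (Dv (sv j) (UU u i)) (s, x)| ≤ ‖iteratedFDeriv ℝ 2 (u s) x‖ := by
    rw [e1]
    exact (abs_pd_pd_le (u_slice_comp_smooth hu s i) l j x).trans
      (norm_iFD_proj_le (u s) (u_slice_smooth hu s) i 2 x)
  calc ‖x‖ ^ k * |Dv (sv l) (Dv (sv j) (UU u i)) (s, x)|
      ≤ ‖x‖ ^ k * ‖iteratedFDeriv ℝ 2 (u s) x‖ := by gcongr
    _ ≤ C := hC s hs x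

include hpdecay in
lemma decays_PP : Decays (PP p) := by
  intro R k
  obtain ⟨C, hC⟩ := hpdecay R k 0
  refine ⟨C, fun s hs x => ?_⟩
  have h2 : |PP p (s, x)| ≤ ‖iteratedFDeriv ℝ 0 (p s) x‖ := by
    rw [norm_iteratedFDeriv_zero]; rfl
  calc ‖x‖ ^ k * |PP p (s, x)| ≤ ‖x‖ ^ k * ‖iteratedFDeriv ℝ 0 (p s) x‖ := by gcongr
    _ ≤ C := hC s hs x

include hp hpdecay in
lemma decays_DPP (j : Fin 3) : Decays (Dv (sv j) (PP p)) := by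
  intro R k
  obtain ⟨C, hC⟩ := hpdecay R k 1
  refine ⟨C, fun s hs x => ?_⟩
  have e1 : Dv (sv j) (PP p) (s, x) = pd j (p s) x :=
    (pd_slice (PP_smooth hp) j s x).symm
  have h2 : |Dv (sv j) (PP p) (s, x)| ≤ ‖iteratedFDeriv ℝ 1 (p s) x‖ := by
    rw [e1]; exact abs_pd_le j x
  calc ‖x‖ ^ k * |Dv (sv j) (PP p) (s, x)| ≤ ‖x‖ ^ k * ‖iteratedFDeriv ℝ 1 (p s) x‖ := by gcongr
    _ ≤ C := hC s hs x

include hp hpdecay in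
lemma decays_DDPP (j l : Fin 3) : Decays (Dv (sv l) (Dv (sv j) (PP p))) := by
  intro R k
  obtain ⟨C, hC⟩ := hpdecay R k 2
  refine ⟨C, fun s hs x => ?_⟩
  have e0 : (fun y => Dv (sv j) (PP p) (s, y)) = pd j (p s) := by
    funext y
    exact (pd_slice (PP_smooth hp) j s y).symm
  have e1 : Dv (sv l) (Dv (sv j) (PP p)) (s, x) = pd l (pd j (p s)) x := by
    rw [← pd_slice (Dv_smooth (PP_smooth hp) (sv j)) l s x, e0]
  have h2 : |Dv (sv l) (Dv (sv j) (PP p)) (s, x)| ≤ ‖iteratedFDeriv ℝ 2 (p s) x‖ := by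
    rw [e1]; exact abs_pd_pd_le (p_slice_smooth hp s) l j x
  calc ‖x‖ ^ k * |Dv (sv l) (Dv (sv j) (PP p)) (s, x)|
      ≤ ‖x‖ ^ k * ‖iteratedFDeriv ℝ 2 (p s) x‖ := by gcongr
    _ ≤ C := hC s hs x

end withU

lemma Decays.const_mul {f : ℝ × V3 → ℝ} (hf : Decays f) (c : ℝ) :
    Decays (fun q => c * f q) := by
  intro R k
  obtain ⟨C1, h1⟩ := hf R k
  refine ⟨|c| * C1, fun s hs x => ?_⟩
  have e1 := h1 s hs x
  calc ‖x‖ ^ k * |c * f (s, x)| = |c| * (‖x‖ ^ k * |f (s, x)|) := by rw [abs_mul]; ring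
    _ ≤ |c| * C1 := by
        apply mul_le_mul_of_nonneg_left e1 (abs_nonneg c)

/-! ### Integration by parts for slices -/

lemma ibp_slice {Jf Jg : ℝ × V3 → ℝ} (hf : ContDiff ℝ ∞ Jf) (hg : ContDiff ℝ ∞ Jg)
    (i : Fin 3) (s : ℝ)
    (h1 : Decays (fun q => Jf q * Dv (sv i) Jg q))
    (h2 : Decays (fun q => Dv (sv i) Jf q * Jg q))
    (h3 : Decays (fun q => Jf q * Jg q)) :
    ∫ x : V3, Jf (s, x) * Dv (sv i) Jg (s, x) = - ∫ x : V3, Dv (sv i) Jf (s, x) * Jg (s, x) := by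
  have e1 : ∀ x : V3, fderiv ℝ (fun y => Jg (s, y)) x (Pi.single i 1) = Dv (sv i) Jg (s, x) :=
    fun x => pd_slice hg i s x
  have e2 : ∀ x : V3, fderiv ℝ (fun y => Jf (s, y)) x (Pi.single i 1) = Dv (sv i) Jf (s, x) :=
    fun x => pd_slice hf i s x
  have int1 : Integrable (fun x : V3 => Jf (s, x) * Dv (sv i) Jg (s, x)) :=
    h1.integrable (hf.continuous.mul (Dv_smooth hg (sv i)).continuous) s
  have int2 : Integrable (fun x : V3 => Dv (sv i) Jf (s, x) * Jg (s, x)) :=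
    h2.integrable ((Dv_smooth hf (sv i)).continuous.mul hg.continuous) s
  have int3 : Integrable (fun x : V3 => Jf (s, x) * Jg (s, x)) :=
    h3.integrable (hf.continuous.mul hg.continuous) s
  have key := integral_mul_fderiv_eq_neg_fderiv_mul_of_integrable (μ := (volume : Measure V3))
    (f := fun y => Jf (s, y)) (g := fun y => Jg (s, y)) (v := Pi.single i 1)
    (by simpa only [e2] using int2) (by simpa only [e1] using int1) int3
    (fun x _ => diff_of_smooth (contDiff_slice hf s) x) (fun x _ => diff_of_smooth (contDiff_slice hg s) x)
  calc ∫ x : V3, Jf (s, x) * Dv (sv i) Jg (s, x)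
      = ∫ x : V3, Jf (s, x) * fderiv ℝ (fun y => Jg (s, y)) x (Pi.single i 1) := by
        simp only [e1]
    _ = - ∫ x : V3, fderiv ℝ (fun y => Jf (s, y)) x (Pi.single i 1) * Jg (s, x) := key
    _ = - ∫ x : V3, Dv (sv i) Jf (s, x) * Jg (s, x) := by simp only [e2]

end EHAux

open EHAux

theorem euler_helicity_conserved (u : ℝ → V3 → V3) (p : ℝ → V3 → ℝ)
    (hu : ContDiff ℝ (⊤ : ℕ∞) fun q : ℝ × V3 => u q.1 q.2)
    (hp : ContDiff ℝ (⊤ : ℕ∞) fun q : ℝ × V3 => p q.1 q.2)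
    (hdiv : ∀ t x, vdiv (u t) x = 0)
    (heuler : ∀ t x, dtv u t x = -(covD (u t) (u t) x) - grad (p t) x)
    (hudecay : ∀ (R : ℝ) (k n : ℕ), ∃ C : ℝ, ∀ t ∈ Set.Icc (-R) R, ∀ x : V3,
      ‖x‖ ^ k * ‖iteratedFDeriv ℝ n (u t) x‖ ≤ C)
    (hpdecay : ∀ (R : ℝ) (k n : ℕ), ∃ C : ℝ, ∀ t ∈ Set.Icc (-R) R, ∀ x : V3,
      ‖x‖ ^ k * ‖iteratedFDeriv ℝ n (p t) x‖ ≤ C)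
    (t : ℝ) :
    ∫ x : V3, dot (u t x) (vcurl (u t) x) = ∫ x : V3, dot (u 0 x) (vcurl (u 0) x) := by
  classical
  have hUs : ∀ i, ContDiff ℝ ∞ (UU u i) := UU_smooth hu
  have hPs : ContDiff ℝ ∞ (PP p) := PP_smooth hp
  have hDUs : ∀ i j, ContDiff ℝ ∞ (Dv (sv j) (UU u i)) := fun i j => Dv_smooth (hUs i) _
  have hDPs : ∀ i, ContDiff ℝ ∞ (Dv (sv i) (PP p)) := fun i => Dv_smooth hPs _
  have hWs : ∀ i, ContDiff ℝ ∞ (Dv tvec (UU u i)) := fun i => Dv_smooth (hUs i) _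
  have hDWs : ∀ i j, ContDiff ℝ ∞ (Dv (sv j) (Dv tvec (UU u i))) :=
    fun i j => Dv_smooth (hWs i) _
  have hdU' : ∀ i (q : ℝ × V3), DifferentiableAt ℝ (UU u i) q :=
    fun i q => diff_of_smooth (hUs i) q
  have hdDU' : ∀ i j (q : ℝ × V3), DifferentiableAt ℝ (Dv (sv j) (UU u i)) q :=
    fun i j q => diff_of_smooth (hDUs i j) q
  have hdP' : ∀ q : ℝ × V3, DifferentiableAt ℝ (PP p) q := fun q => diff_of_smooth hPs q
  have hdDP' : ∀ i (q : ℝ × V3), DifferentiableAt ℝ (Dv (sv i) (PP p)) q :=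
    fun i q => diff_of_smooth (hDPs i) q
  have dU : ∀ i, Decays (UU u i) := decays_UU hudecay
  have dDU : ∀ i j, Decays (Dv (sv j) (UU u i)) := decays_DUU hudecay hu
  have dDDU : ∀ i j l, Decays (Dv (sv l) (Dv (sv j) (UU u i))) := decays_DDUU hudecay hu
  have dP : Decays (PP p) := decays_PP hpdecay
  have dDP : ∀ i, Decays (Dv (sv i) (PP p)) := decays_DPP hpdecay hp
  have dDDP : ∀ i l, Decays (Dv (sv l) (Dv (sv i) (PP p))) := fun i l => decays_DDPP hpdecay hp i l
  -- Euler equation in joint form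
  have hW : ∀ i, Dv tvec (UU u i)
      = fun q => -(UU u 0 q * Dv (sv 0) (UU u i) q + UU u 1 q * Dv (sv 1) (UU u i) q
          + UU u 2 q * Dv (sv 2) (UU u i) q) - Dv (sv i) (PP p) q := by
    intro i
    funext q
    obtain ⟨s, x⟩ := q
    have h1 : Dv tvec (UU u i) (s, x) = dtv u s x i := ((hasDerivAt_slice (hUs i) s x).deriv).symm
    have h2 : dtv u s x i = -(covD (u s) (u s) x i) - grad (p s) x i := congrFun (heuler s x) i
    have h4 : covD (u s) (u s) x i
        = u s x 0 * pd 0 (fun y => u s y i) x + u s x 1 * pd 1 (fun y => u s y i) x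
          + u s x 2 * pd 2 (fun y => u s y i) x := by
      show (∑ j, u s x j * pd j (fun y => u s y i) x) = _
      rw [Fin.sum_univ_three]
    have h5 : ∀ j, pd j (fun y => u s y i) x = Dv (sv j) (UU u i) (s, x) :=
      fun j => pd_slice (hUs i) j s x
    have h6 : grad (p s) x i = Dv (sv i) (PP p) (s, x) := pd_slice hPs i s x
    rw [h1, h2, h4, h5 0, h5 1, h5 2, h6]
    rfl
  -- the helicity integrand, in joint form
  set G : ℝ × V3 → ℝ := fun q =>
      UU u 0 q * (Dv (sv 1) (UU u 2) q - Dv (sv 2) (UU u 1) q)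
    + UU u 1 q * (Dv (sv 2) (UU u 0) q - Dv (sv 0) (UU u 2) q)
    + UU u 2 q * (Dv (sv 0) (UU u 1) q - Dv (sv 1) (UU u 0) q) with hGdef
  have hGs : ContDiff ℝ ∞ G := by
    rw [hGdef]
    exact (((hUs 0).mul ((hDUs 2 1).sub (hDUs 1 2))).add
      ((hUs 1).mul ((hDUs 0 2).sub (hDUs 2 0)))).add
      ((hUs 2).mul ((hDUs 1 0).sub (hDUs 0 1)))
  have hGd : Decays G := by
    rw [hGdef]
    exact (((dU 0).mul ((dDU 2 1).sub (dDU 1 2))).add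
      ((dU 1).mul ((dDU 0 2).sub (dDU 2 0)))).add
      ((dU 2).mul ((dDU 1 0).sub (dDU 0 1)))
  -- time derivative of G, pointwise
  have hDtG : ∀ q : ℝ × V3, Dv tvec G q
      = Dv tvec (UU u 0) q * (Dv (sv 1) (UU u 2) q - Dv (sv 2) (UU u 1) q)
      + Dv tvec (UU u 1) q * (Dv (sv 2) (UU u 0) q - Dv (sv 0) (UU u 2) q)
      + Dv tvec (UU u 2) q * (Dv (sv 0) (UU u 1) q - Dv (sv 1) (UU u 0) q)
      + (UU u 0 q * (Dv (sv 1) (Dv tvec (UU u 2)) q - Dv (sv 2) (Dv tvec (UU u 1)) q)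
       + UU u 1 q * (Dv (sv 2) (Dv tvec (UU u 0)) q - Dv (sv 0) (Dv tvec (UU u 2)) q)
       + UU u 2 q * (Dv (sv 0) (Dv tvec (UU u 1)) q - Dv (sv 1) (Dv tvec (UU u 0)) q)) := by
    intro q
    have hfd := ((((hdU' 0 q).hasFDerivAt.fun_mul
        ((hdDU' 2 1 q).hasFDerivAt.fun_sub (hdDU' 1 2 q).hasFDerivAt)).fun_add
      ((hdU' 1 q).hasFDerivAt.fun_mul
        ((hdDU' 0 2 q).hasFDerivAt.fun_sub (hdDU' 2 0 q).hasFDerivAt))).fun_add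
      ((hdU' 2 q).hasFDerivAt.fun_mul
        ((hdDU' 1 0 q).hasFDerivAt.fun_sub (hdDU' 0 1 q).hasFDerivAt))).fderiv
    have cv : ∀ (v : ℝ × V3) (X : ℝ × V3 → ℝ), fderiv ℝ X q v = Dv v X q := fun _ _ => rfl
    have cm : ∀ i j, Dv tvec (Dv (sv j) (UU u i)) q = Dv (sv j) (Dv tvec (UU u i)) q :=
      fun i j => congrFun (Dv_comm (hUs i) tvec (sv j)) q
    calc Dv tvec G q
        = fderiv ℝ (fun q => UU u 0 q * (Dv (sv 1) (UU u 2) q - Dv (sv 2) (UU u 1) q)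
            + UU u 1 q * (Dv (sv 2) (UU u 0) q - Dv (sv 0) (UU u 2) q)
            + UU u 2 q * (Dv (sv 0) (UU u 1) q - Dv (sv 1) (UU u 0) q)) q tvec := by
          rw [hGdef]; rfl
      _ = _ := by
          rw [hfd]
          simp only [ContinuousLinearMap.add_apply, ContinuousLinearMap.smul_apply,
            ContinuousLinearMap.sub_apply, ContinuousLinearMap.coe_sub', Pi.sub_apply,
            smul_eq_mul, cv, cm]
          ring
  -- spatial derivatives of the time derivative, via Euler
  have hDW_eq : ∀ i j, Dv (sv j) (Dv tvec (UU u i))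
      = fun q => -((Dv (sv j) (UU u 0) q * Dv (sv 0) (UU u i) q
              + UU u 0 q * Dv (sv j) (Dv (sv 0) (UU u i)) q)
            + (Dv (sv j) (UU u 1) q * Dv (sv 1) (UU u i) q
              + UU u 1 q * Dv (sv j) (Dv (sv 1) (UU u i)) q)
            + (Dv (sv j) (UU u 2) q * Dv (sv 2) (UU u i) q
              + UU u 2 q * Dv (sv j) (Dv (sv 2) (UU u i)) q))
          - Dv (sv j) (Dv (sv i) (PP p)) q := by
    intro i j
    funext q
    have hfd := ((((((hdU' 0 q).hasFDerivAt.fun_mul (hdDU' i 0 q).hasFDerivAt).fun_add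
        ((hdU' 1 q).hasFDerivAt.fun_mul (hdDU' i 1 q).hasFDerivAt)).fun_add
        ((hdU' 2 q).hasFDerivAt.fun_mul (hdDU' i 2 q).hasFDerivAt)).fun_neg.fun_sub
        (hdDP' i q).hasFDerivAt)).fderiv
    have cv : ∀ (v : ℝ × V3) (X : ℝ × V3 → ℝ), fderiv ℝ X q v = Dv v X q := fun _ _ => rfl
    calc Dv (sv j) (Dv tvec (UU u i)) q
        = fderiv ℝ (fun q => -(UU u 0 q * Dv (sv 0) (UU u i) q + UU u 1 q * Dv (sv 1) (UU u i) q
            + UU u 2 q * Dv (sv 2) (UU u i) q) - Dv (sv i) (PP p) q) q (sv j) := by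
          rw [hW i]; rfl
      _ = _ := by
          rw [hfd]
          simp only [ContinuousLinearMap.add_apply, ContinuousLinearMap.smul_apply,
            ContinuousLinearMap.sub_apply, ContinuousLinearMap.neg_apply,
            ContinuousLinearMap.coe_sub', Pi.sub_apply, smul_eq_mul, cv]
          ring
  have dW : ∀ i, Decays (Dv tvec (UU u i)) := by
    intro i
    rw [hW i]
    exact ((((dU 0).mul (dDU i 0)).add ((dU 1).mul (dDU i 1))).add
      ((dU 2).mul (dDU i 2))).neg.sub (dDP i)
  have dDW : ∀ i j, Decays (Dv (sv j) (Dv tvec (UU u i))) := by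
    intro i j
    rw [hDW_eq i j]
    exact ((((dDU 0 j).mul (dDU i 0)).add ((dU 0).mul (dDDU i 0 j))).add
      ((((dDU 1 j).mul (dDU i 1)).add ((dU 1).mul (dDDU i 1 j))))).add
      (((dDU 2 j).mul (dDU i 2)).add ((dU 2).mul (dDDU i 2 j))) |>.neg.sub (dDDP i j)
  have dDtG : Decays (Dv tvec G) := by
    rw [funext hDtG]
    exact ((((dW 0).mul ((dDU 2 1).sub (dDU 1 2))).add
        ((dW 1).mul ((dDU 0 2).sub (dDU 2 0)))).add
        ((dW 2).mul ((dDU 1 0).sub (dDU 0 1)))).add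
      ((((dU 0).mul ((dDW 2 1).sub (dDW 1 2))).add
        ((dU 1).mul ((dDW 0 2).sub (dDW 2 0)))).add
        ((dU 2).mul ((dDW 1 0).sub (dDW 0 1))))
  -- Bernoulli-type potential
  set Φ : ℝ × V3 → ℝ := fun q => 2 * PP p q
      + (UU u 0 q * UU u 0 q + UU u 1 q * UU u 1 q + UU u 2 q * UU u 2 q) with hPhidef
  have hPhis : ContDiff ℝ ∞ Φ := by
    rw [hPhidef]
    exact (contDiff_const.mul hPs).add
      ((((hUs 0).mul (hUs 0)).add ((hUs 1).mul (hUs 1))).add ((hUs 2).mul (hUs 2)))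
  have dPhi : Decays Φ := by
    rw [hPhidef]
    exact (dP.const_mul 2).add
      ((((dU 0).mul (dU 0)).add ((dU 1).mul (dU 1))).add ((dU 2).mul (dU 2)))
  have hPhiD : ∀ i (q : ℝ × V3), Dv (sv i) Φ q = 2 * Dv (sv i) (PP p) q
      + 2 * (UU u 0 q * Dv (sv i) (UU u 0) q + UU u 1 q * Dv (sv i) (UU u 1) q
        + UU u 2 q * Dv (sv i) (UU u 2) q) := by
    intro i q
    have hfd := (((hdP' q).hasFDerivAt.const_mul (2 : ℝ)).fun_add
      ((((hdU' 0 q).hasFDerivAt.fun_mul (hdU' 0 q).hasFDerivAt).fun_add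
        ((hdU' 1 q).hasFDerivAt.fun_mul (hdU' 1 q).hasFDerivAt)).fun_add
        ((hdU' 2 q).hasFDerivAt.fun_mul (hdU' 2 q).hasFDerivAt))).fderiv
    have cv : ∀ (v : ℝ × V3) (X : ℝ × V3 → ℝ), fderiv ℝ X q v = Dv v X q := fun _ _ => rfl
    calc Dv (sv i) Φ q
        = fderiv ℝ (fun q => 2 * PP p q + (UU u 0 q * UU u 0 q + UU u 1 q * UU u 1 q
            + UU u 2 q * UU u 2 q)) q (sv i) := by rw [hPhidef]; rfl
      _ = _ := by
          rw [hfd]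
          simp only [ContinuousLinearMap.add_apply, ContinuousLinearMap.smul_apply,
            smul_eq_mul, cv]
          ring
  have hPhiDs : ∀ i, ContDiff ℝ ∞ (Dv (sv i) Φ) := fun i => Dv_smooth hPhis _
  have dPhiD : ∀ i, Decays (Dv (sv i) Φ) := by
    intro i
    rw [funext (hPhiD i)]
    exact ((dDP i).const_mul 2).add
      (((((dU 0).mul (dDU 0 i)).add ((dU 1).mul (dDU 1 i))).add
        ((dU 2).mul (dDU 2 i))).const_mul 2)
  -- divergence of curl vanishes
  have hdiv3 : ∀ q : ℝ × V3,
      Dv (sv 0) (fun q => Dv (sv 1) (UU u 2) q - Dv (sv 2) (UU u 1) q) q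
      + Dv (sv 1) (fun q => Dv (sv 2) (UU u 0) q - Dv (sv 0) (UU u 2) q) q
      + Dv (sv 2) (fun q => Dv (sv 0) (UU u 1) q - Dv (sv 1) (UU u 0) q) q = 0 := by
    intro q
    have e0 := congrFun (Dv_sub_fun (hDUs 2 1) (hDUs 1 2) (sv 0)) q
    have e1 := congrFun (Dv_sub_fun (hDUs 0 2) (hDUs 2 0) (sv 1)) q
    have e2 := congrFun (Dv_sub_fun (hDUs 1 0) (hDUs 0 1) (sv 2)) q
    rw [e0, e1, e2, congrFun (Dv_comm (hUs 2) (sv 0) (sv 1)) q,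
      congrFun (Dv_comm (hUs 1) (sv 0) (sv 2)) q, congrFun (Dv_comm (hUs 0) (sv 1) (sv 2)) q]
    ring
  -- derivatives of the curl components
  have hDc0 : Dv (sv 0) (fun q => Dv (sv 1) (UU u 2) q - Dv (sv 2) (UU u 1) q)
      = fun q => Dv (sv 0) (Dv (sv 1) (UU u 2)) q - Dv (sv 0) (Dv (sv 2) (UU u 1)) q :=
    Dv_sub_fun (hDUs 2 1) (hDUs 1 2) (sv 0)
  have hDc1 : Dv (sv 1) (fun q => Dv (sv 2) (UU u 0) q - Dv (sv 0) (UU u 2) q)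
      = fun q => Dv (sv 1) (Dv (sv 2) (UU u 0)) q - Dv (sv 1) (Dv (sv 0) (UU u 2)) q :=
    Dv_sub_fun (hDUs 0 2) (hDUs 2 0) (sv 1)
  have hDc2 : Dv (sv 2) (fun q => Dv (sv 0) (UU u 1) q - Dv (sv 1) (UU u 0) q)
      = fun q => Dv (sv 2) (Dv (sv 0) (UU u 1)) q - Dv (sv 2) (Dv (sv 1) (UU u 0)) q :=
    Dv_sub_fun (hDUs 1 0) (hDUs 0 1) (sv 2)
  have dDvc0 : Decays (Dv (sv 0) (fun q => Dv (sv 1) (UU u 2) q - Dv (sv 2) (UU u 1) q)) := by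
    rw [hDc0]; exact (dDDU 2 1 0).sub (dDDU 1 2 0)
  have dDvc1 : Decays (Dv (sv 1) (fun q => Dv (sv 2) (UU u 0) q - Dv (sv 0) (UU u 2) q)) := by
    rw [hDc1]; exact (dDDU 0 2 1).sub (dDDU 2 0 1)
  have dDvc2 : Decays (Dv (sv 2) (fun q => Dv (sv 0) (UU u 1) q - Dv (sv 1) (UU u 0) q)) := by
    rw [hDc2]; exact (dDDU 1 0 2).sub (dDDU 0 1 2)
  -- the key vanishing of the derivative of the helicity
  have hJ0 : ∀ s : ℝ, ∫ x : V3, Dv tvec G (s, x) = 0 := by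
    intro s
    have intg : ∀ F : ℝ × V3 → ℝ, Decays F → ContDiff ℝ ∞ F →
        Integrable (fun x : V3 => F (s, x)) :=
      fun F hd hsm => hd.integrable hsm.continuous s
    have iDUW : ∀ a b c : Fin 3,
        Integrable (fun x : V3 => Dv (sv b) (UU u a) (s, x) * Dv tvec (UU u c) (s, x)) :=
      fun a b c => intg (fun q => Dv (sv b) (UU u a) q * Dv tvec (UU u c) q)
        ((dDU a b).mul (dW c)) ((hDUs a b).mul (hWs c))
    have iUDW : ∀ a b c : Fin 3,
        Integrable (fun x : V3 => UU u a (s, x) * Dv (sv b) (Dv tvec (UU u c)) (s, x)) :=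
      fun a b c => intg (fun q => UU u a q * Dv (sv b) (Dv tvec (UU u c)) q)
        ((dU a).mul (dDW c b)) ((hUs a).mul (hDWs c b))
    have iK1 : Integrable (fun x : V3 =>
        Dv (sv 1) (UU u 2) (s, x) * Dv tvec (UU u 0) (s, x)
        - Dv (sv 2) (UU u 1) (s, x) * Dv tvec (UU u 0) (s, x)) :=
      (iDUW 2 1 0).sub (iDUW 1 2 0)
    have iK2 : Integrable (fun x : V3 =>
        Dv (sv 2) (UU u 0) (s, x) * Dv tvec (UU u 1) (s, x)
        - Dv (sv 0) (UU u 2) (s, x) * Dv tvec (UU u 1) (s, x)) :=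
      (iDUW 0 2 1).sub (iDUW 2 0 1)
    have iK3 : Integrable (fun x : V3 =>
        Dv (sv 0) (UU u 1) (s, x) * Dv tvec (UU u 2) (s, x)
        - Dv (sv 1) (UU u 0) (s, x) * Dv tvec (UU u 2) (s, x)) :=
      (iDUW 1 0 2).sub (iDUW 0 1 2)
    have iK12 : Integrable (fun x : V3 =>
        (Dv (sv 1) (UU u 2) (s, x) * Dv tvec (UU u 0) (s, x)
        - Dv (sv 2) (UU u 1) (s, x) * Dv tvec (UU u 0) (s, x))
        + (Dv (sv 2) (UU u 0) (s, x) * Dv tvec (UU u 1) (s, x)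
        - Dv (sv 0) (UU u 2) (s, x) * Dv tvec (UU u 1) (s, x))) := iK1.add iK2
    have iL1 : Integrable (fun x : V3 =>
        UU u 0 (s, x) * Dv (sv 1) (Dv tvec (UU u 2)) (s, x)
        - UU u 0 (s, x) * Dv (sv 2) (Dv tvec (UU u 1)) (s, x)) :=
      (iUDW 0 1 2).sub (iUDW 0 2 1)
    have iL2 : Integrable (fun x : V3 =>
        UU u 1 (s, x) * Dv (sv 2) (Dv tvec (UU u 0)) (s, x)
        - UU u 1 (s, x) * Dv (sv 0) (Dv tvec (UU u 2)) (s, x)) :=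
      (iUDW 1 2 0).sub (iUDW 1 0 2)
    have iL3 : Integrable (fun x : V3 =>
        UU u 2 (s, x) * Dv (sv 0) (Dv tvec (UU u 1)) (s, x)
        - UU u 2 (s, x) * Dv (sv 1) (Dv tvec (UU u 0)) (s, x)) :=
      (iUDW 2 0 1).sub (iUDW 2 1 0)
    have iL12 : Integrable (fun x : V3 =>
        (UU u 0 (s, x) * Dv (sv 1) (Dv tvec (UU u 2)) (s, x)
        - UU u 0 (s, x) * Dv (sv 2) (Dv tvec (UU u 1)) (s, x))
        + (UU u 1 (s, x) * Dv (sv 2) (Dv tvec (UU u 0)) (s, x)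
        - UU u 1 (s, x) * Dv (sv 0) (Dv tvec (UU u 2)) (s, x))) := iL1.add iL2
    have ibp6 : ∀ a b c : Fin 3,
        ∫ x : V3, UU u a (s, x) * Dv (sv b) (Dv tvec (UU u c)) (s, x)
          = - ∫ x : V3, Dv (sv b) (UU u a) (s, x) * Dv tvec (UU u c) (s, x) := by
      intro a b c
      have h := ibp_slice (hUs a) (hWs c) b s ((dU a).mul (dDW c b)) ((dDU a b).mul (dW c))
        ((dU a).mul (dW c))
      exact h
    -- the six-term integral K and its vanishing
    have hK : ∫ x : V3,
        ((Dv (sv 1) (UU u 2) (s, x) * Dv tvec (UU u 0) (s, x)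
          - Dv (sv 2) (UU u 1) (s, x) * Dv tvec (UU u 0) (s, x))
        + (Dv (sv 2) (UU u 0) (s, x) * Dv tvec (UU u 1) (s, x)
          - Dv (sv 0) (UU u 2) (s, x) * Dv tvec (UU u 1) (s, x))
        + (Dv (sv 0) (UU u 1) (s, x) * Dv tvec (UU u 2) (s, x)
          - Dv (sv 1) (UU u 0) (s, x) * Dv tvec (UU u 2) (s, x))) = 0 := by
      have ept : (fun x : V3 =>
          (Dv (sv 1) (UU u 2) (s, x) * Dv tvec (UU u 0) (s, x)
            - Dv (sv 2) (UU u 1) (s, x) * Dv tvec (UU u 0) (s, x))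
          + (Dv (sv 2) (UU u 0) (s, x) * Dv tvec (UU u 1) (s, x)
            - Dv (sv 0) (UU u 2) (s, x) * Dv tvec (UU u 1) (s, x))
          + (Dv (sv 0) (UU u 1) (s, x) * Dv tvec (UU u 2) (s, x)
            - Dv (sv 1) (UU u 0) (s, x) * Dv tvec (UU u 2) (s, x)))
          = fun x : V3 => (-(1 : ℝ)/2) *
            (Dv (sv 0) Φ (s, x) * (Dv (sv 1) (UU u 2) (s, x) - Dv (sv 2) (UU u 1) (s, x))
            + Dv (sv 1) Φ (s, x) * (Dv (sv 2) (UU u 0) (s, x) - Dv (sv 0) (UU u 2) (s, x))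
            + Dv (sv 2) Φ (s, x) * (Dv (sv 0) (UU u 1) (s, x) - Dv (sv 1) (UU u 0) (s, x))) := by
        funext x
        rw [congrFun (hW 0) (s, x), congrFun (hW 1) (s, x), congrFun (hW 2) (s, x),
          hPhiD 0 (s, x), hPhiD 1 (s, x), hPhiD 2 (s, x)]
        beta_reduce
        ring
      rw [ept, integral_const_mul]
      have i1 : Integrable (fun x : V3 =>
          Dv (sv 0) Φ (s, x) * (Dv (sv 1) (UU u 2) (s, x) - Dv (sv 2) (UU u 1) (s, x))) :=
        intg (fun q => Dv (sv 0) Φ q * (Dv (sv 1) (UU u 2) q - Dv (sv 2) (UU u 1) q))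
          ((dPhiD 0).mul ((dDU 2 1).sub (dDU 1 2))) ((hPhiDs 0).mul ((hDUs 2 1).sub (hDUs 1 2)))
      have i2 : Integrable (fun x : V3 =>
          Dv (sv 1) Φ (s, x) * (Dv (sv 2) (UU u 0) (s, x) - Dv (sv 0) (UU u 2) (s, x))) :=
        intg (fun q => Dv (sv 1) Φ q * (Dv (sv 2) (UU u 0) q - Dv (sv 0) (UU u 2) q))
          ((dPhiD 1).mul ((dDU 0 2).sub (dDU 2 0))) ((hPhiDs 1).mul ((hDUs 0 2).sub (hDUs 2 0)))
      have i3 : Integrable (fun x : V3 =>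
          Dv (sv 2) Φ (s, x) * (Dv (sv 0) (UU u 1) (s, x) - Dv (sv 1) (UU u 0) (s, x))) :=
        intg (fun q => Dv (sv 2) Φ q * (Dv (sv 0) (UU u 1) q - Dv (sv 1) (UU u 0) q))
          ((dPhiD 2).mul ((dDU 1 0).sub (dDU 0 1))) ((hPhiDs 2).mul ((hDUs 1 0).sub (hDUs 0 1)))
      have i12 : Integrable (fun x : V3 =>
          Dv (sv 0) Φ (s, x) * (Dv (sv 1) (UU u 2) (s, x) - Dv (sv 2) (UU u 1) (s, x))
          + Dv (sv 1) Φ (s, x) * (Dv (sv 2) (UU u 0) (s, x) - Dv (sv 0) (UU u 2) (s, x))) :=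
        i1.add i2
      rw [integral_add i12 i3, integral_add i1 i2]
      -- integrate by parts against Φ
      have hb0 := ibp_slice hPhis ((hDUs 2 1).sub (hDUs 1 2)) 0 s
        (dPhi.mul dDvc0) ((dPhiD 0).mul ((dDU 2 1).sub (dDU 1 2)))
        (dPhi.mul ((dDU 2 1).sub (dDU 1 2)))
      have hb1 := ibp_slice hPhis ((hDUs 0 2).sub (hDUs 2 0)) 1 s
        (dPhi.mul dDvc1) ((dPhiD 1).mul ((dDU 0 2).sub (dDU 2 0)))
        (dPhi.mul ((dDU 0 2).sub (dDU 2 0)))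
      have hb2 := ibp_slice hPhis ((hDUs 1 0).sub (hDUs 0 1)) 2 s
        (dPhi.mul dDvc2) ((dPhiD 2).mul ((dDU 1 0).sub (dDU 0 1)))
        (dPhi.mul ((dDU 1 0).sub (dDU 0 1)))
      have iP0 : Integrable (fun x : V3 => Φ (s, x)
          * Dv (sv 0) (fun q => Dv (sv 1) (UU u 2) q - Dv (sv 2) (UU u 1) q) (s, x)) :=
        intg (fun q => Φ q * Dv (sv 0) (fun q => Dv (sv 1) (UU u 2) q - Dv (sv 2) (UU u 1) q) q)
          (dPhi.mul dDvc0) (hPhis.mul (Dv_smooth ((hDUs 2 1).sub (hDUs 1 2)) _))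
      have iP1 : Integrable (fun x : V3 => Φ (s, x)
          * Dv (sv 1) (fun q => Dv (sv 2) (UU u 0) q - Dv (sv 0) (UU u 2) q) (s, x)) :=
        intg (fun q => Φ q * Dv (sv 1) (fun q => Dv (sv 2) (UU u 0) q - Dv (sv 0) (UU u 2) q) q)
          (dPhi.mul dDvc1) (hPhis.mul (Dv_smooth ((hDUs 0 2).sub (hDUs 2 0)) _))
      have iP2 : Integrable (fun x : V3 => Φ (s, x)
          * Dv (sv 2) (fun q => Dv (sv 0) (UU u 1) q - Dv (sv 1) (UU u 0) q) (s, x)) :=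
        intg (fun q => Φ q * Dv (sv 2) (fun q => Dv (sv 0) (UU u 1) q - Dv (sv 1) (UU u 0) q) q)
          (dPhi.mul dDvc2) (hPhis.mul (Dv_smooth ((hDUs 1 0).sub (hDUs 0 1)) _))
      have hzero : ∫ x : V3,
          (Φ (s, x) * Dv (sv 0) (fun q => Dv (sv 1) (UU u 2) q - Dv (sv 2) (UU u 1) q) (s, x)
          + Φ (s, x) * Dv (sv 1) (fun q => Dv (sv 2) (UU u 0) q - Dv (sv 0) (UU u 2) q) (s, x)
          + Φ (s, x) * Dv (sv 2) (fun q => Dv (sv 0) (UU u 1) q - Dv (sv 1) (UU u 0) q) (s, x))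
          = 0 := by
        have ezero : (fun x : V3 =>
            Φ (s, x) * Dv (sv 0) (fun q => Dv (sv 1) (UU u 2) q - Dv (sv 2) (UU u 1) q) (s, x)
            + Φ (s, x) * Dv (sv 1) (fun q => Dv (sv 2) (UU u 0) q - Dv (sv 0) (UU u 2) q) (s, x)
            + Φ (s, x) * Dv (sv 2) (fun q => Dv (sv 0) (UU u 1) q - Dv (sv 1) (UU u 0) q) (s, x))
            = fun _ : V3 => (0 : ℝ) := by
          funext x
          calc Φ (s, x) * Dv (sv 0) (fun q => Dv (sv 1) (UU u 2) q - Dv (sv 2) (UU u 1) q) (s, x)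
              + Φ (s, x) * Dv (sv 1) (fun q => Dv (sv 2) (UU u 0) q - Dv (sv 0) (UU u 2) q) (s, x)
              + Φ (s, x) * Dv (sv 2) (fun q => Dv (sv 0) (UU u 1) q - Dv (sv 1) (UU u 0) q) (s, x)
              = Φ (s, x) *
                (Dv (sv 0) (fun q => Dv (sv 1) (UU u 2) q - Dv (sv 2) (UU u 1) q) (s, x)
                + Dv (sv 1) (fun q => Dv (sv 2) (UU u 0) q - Dv (sv 0) (UU u 2) q) (s, x)
                + Dv (sv 2) (fun q => Dv (sv 0) (UU u 1) q - Dv (sv 1) (UU u 0) q) (s, x)) := by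
                ring
            _ = 0 := by rw [hdiv3 (s, x), mul_zero]
        rw [ezero]
        simp
      have hsplitz := hzero
      have iP01 : Integrable (fun x : V3 =>
          Φ (s, x) * Dv (sv 0) (fun q => Dv (sv 1) (UU u 2) q - Dv (sv 2) (UU u 1) q) (s, x)
          + Φ (s, x) * Dv (sv 1) (fun q => Dv (sv 2) (UU u 0) q - Dv (sv 0) (UU u 2) q) (s, x)) :=
        iP0.add iP1
      rw [integral_add iP01 iP2, integral_add iP0 iP1] at hsplitz
      linarith [hb0, hb1, hb2, hsplitz]
    -- split K into its six pieces
    rw [integral_add iK12 iK3, integral_add iK1 iK2,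
      integral_sub (iDUW 2 1 0) (iDUW 1 2 0), integral_sub (iDUW 0 2 1) (iDUW 2 0 1),
      integral_sub (iDUW 1 0 2) (iDUW 0 1 2)] at hK
    -- now the main computation
    have e : (fun x : V3 => Dv tvec G (s, x)) = fun x : V3 =>
        (Dv tvec (UU u 0) (s, x) * (Dv (sv 1) (UU u 2) (s, x) - Dv (sv 2) (UU u 1) (s, x))
        + Dv tvec (UU u 1) (s, x) * (Dv (sv 2) (UU u 0) (s, x) - Dv (sv 0) (UU u 2) (s, x))
        + Dv tvec (UU u 2) (s, x) * (Dv (sv 0) (UU u 1) (s, x) - Dv (sv 1) (UU u 0) (s, x)))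
        + (UU u 0 (s, x) * (Dv (sv 1) (Dv tvec (UU u 2)) (s, x)
            - Dv (sv 2) (Dv tvec (UU u 1)) (s, x))
         + UU u 1 (s, x) * (Dv (sv 2) (Dv tvec (UU u 0)) (s, x)
            - Dv (sv 0) (Dv tvec (UU u 2)) (s, x))
         + UU u 2 (s, x) * (Dv (sv 0) (Dv tvec (UU u 1)) (s, x)
            - Dv (sv 1) (Dv tvec (UU u 0)) (s, x))) :=
      funext fun x => hDtG (s, x)
    have iF1 : Integrable (fun x : V3 =>
        Dv tvec (UU u 0) (s, x) * (Dv (sv 1) (UU u 2) (s, x) - Dv (sv 2) (UU u 1) (s, x))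
        + Dv tvec (UU u 1) (s, x) * (Dv (sv 2) (UU u 0) (s, x) - Dv (sv 0) (UU u 2) (s, x))
        + Dv tvec (UU u 2) (s, x) * (Dv (sv 0) (UU u 1) (s, x) - Dv (sv 1) (UU u 0) (s, x))) :=
      intg (fun q => Dv tvec (UU u 0) q * (Dv (sv 1) (UU u 2) q - Dv (sv 2) (UU u 1) q)
          + Dv tvec (UU u 1) q * (Dv (sv 2) (UU u 0) q - Dv (sv 0) (UU u 2) q)
          + Dv tvec (UU u 2) q * (Dv (sv 0) (UU u 1) q - Dv (sv 1) (UU u 0) q))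
        ((((dW 0).mul ((dDU 2 1).sub (dDU 1 2))).add
          ((dW 1).mul ((dDU 0 2).sub (dDU 2 0)))).add
          ((dW 2).mul ((dDU 1 0).sub (dDU 0 1))))
        ((((hWs 0).mul ((hDUs 2 1).sub (hDUs 1 2))).add
          ((hWs 1).mul ((hDUs 0 2).sub (hDUs 2 0)))).add
          ((hWs 2).mul ((hDUs 1 0).sub (hDUs 0 1))))
    have iF2 : Integrable (fun x : V3 =>
        UU u 0 (s, x) * (Dv (sv 1) (Dv tvec (UU u 2)) (s, x)
          - Dv (sv 2) (Dv tvec (UU u 1)) (s, x))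
        + UU u 1 (s, x) * (Dv (sv 2) (Dv tvec (UU u 0)) (s, x)
          - Dv (sv 0) (Dv tvec (UU u 2)) (s, x))
        + UU u 2 (s, x) * (Dv (sv 0) (Dv tvec (UU u 1)) (s, x)
          - Dv (sv 1) (Dv tvec (UU u 0)) (s, x))) :=
      intg (fun q => UU u 0 q * (Dv (sv 1) (Dv tvec (UU u 2)) q - Dv (sv 2) (Dv tvec (UU u 1)) q)
          + UU u 1 q * (Dv (sv 2) (Dv tvec (UU u 0)) q - Dv (sv 0) (Dv tvec (UU u 2)) q)
          + UU u 2 q * (Dv (sv 0) (Dv tvec (UU u 1)) q - Dv (sv 1) (Dv tvec (UU u 0)) q))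
        ((((dU 0).mul ((dDW 2 1).sub (dDW 1 2))).add
          ((dU 1).mul ((dDW 0 2).sub (dDW 2 0)))).add
          ((dU 2).mul ((dDW 1 0).sub (dDW 0 1))))
        ((((hUs 0).mul ((hDWs 2 1).sub (hDWs 1 2))).add
          ((hUs 1).mul ((hDWs 0 2).sub (hDWs 2 0)))).add
          ((hUs 2).mul ((hDWs 1 0).sub (hDWs 0 1))))
    rw [e, integral_add iF1 iF2]
    -- rewrite the first part as K's pieces
    have e1 : (fun x : V3 =>
        Dv tvec (UU u 0) (s, x) * (Dv (sv 1) (UU u 2) (s, x) - Dv (sv 2) (UU u 1) (s, x))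
        + Dv tvec (UU u 1) (s, x) * (Dv (sv 2) (UU u 0) (s, x) - Dv (sv 0) (UU u 2) (s, x))
        + Dv tvec (UU u 2) (s, x) * (Dv (sv 0) (UU u 1) (s, x) - Dv (sv 1) (UU u 0) (s, x)))
        = fun x : V3 =>
        (Dv (sv 1) (UU u 2) (s, x) * Dv tvec (UU u 0) (s, x)
          - Dv (sv 2) (UU u 1) (s, x) * Dv tvec (UU u 0) (s, x))
        + (Dv (sv 2) (UU u 0) (s, x) * Dv tvec (UU u 1) (s, x)
          - Dv (sv 0) (UU u 2) (s, x) * Dv tvec (UU u 1) (s, x))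
        + (Dv (sv 0) (UU u 1) (s, x) * Dv tvec (UU u 2) (s, x)
          - Dv (sv 1) (UU u 0) (s, x) * Dv tvec (UU u 2) (s, x)) :=
      funext fun x => by ring
    have e2 : (fun x : V3 =>
        UU u 0 (s, x) * (Dv (sv 1) (Dv tvec (UU u 2)) (s, x)
          - Dv (sv 2) (Dv tvec (UU u 1)) (s, x))
        + UU u 1 (s, x) * (Dv (sv 2) (Dv tvec (UU u 0)) (s, x)
          - Dv (sv 0) (Dv tvec (UU u 2)) (s, x))
        + UU u 2 (s, x) * (Dv (sv 0) (Dv tvec (UU u 1)) (s, x)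
          - Dv (sv 1) (Dv tvec (UU u 0)) (s, x)))
        = fun x : V3 =>
        (UU u 0 (s, x) * Dv (sv 1) (Dv tvec (UU u 2)) (s, x)
          - UU u 0 (s, x) * Dv (sv 2) (Dv tvec (UU u 1)) (s, x))
        + (UU u 1 (s, x) * Dv (sv 2) (Dv tvec (UU u 0)) (s, x)
          - UU u 1 (s, x) * Dv (sv 0) (Dv tvec (UU u 2)) (s, x))
        + (UU u 2 (s, x) * Dv (sv 0) (Dv tvec (UU u 1)) (s, x)
          - UU u 2 (s, x) * Dv (sv 1) (Dv tvec (UU u 0)) (s, x)) :=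
      funext fun x => by ring
    rw [e1, e2]
    rw [integral_add iK12 iK3, integral_add iK1 iK2,
      integral_sub (iDUW 2 1 0) (iDUW 1 2 0), integral_sub (iDUW 0 2 1) (iDUW 2 0 1),
      integral_sub (iDUW 1 0 2) (iDUW 0 1 2)]
    rw [integral_add iL12 iL3, integral_add iL1 iL2,
      integral_sub (iUDW 0 1 2) (iUDW 0 2 1), integral_sub (iUDW 1 2 0) (iUDW 1 0 2),
      integral_sub (iUDW 2 0 1) (iUDW 2 1 0)]
    rw [ibp6 0 1 2, ibp6 0 2 1, ibp6 1 2 0, ibp6 1 0 2, ibp6 2 0 1, ibp6 2 1 0]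
    linarith [hK]
  -- differentiation under the integral sign
  have hH : ∀ s₀ : ℝ, HasDerivAt (fun s => ∫ x : V3, G (s, x))
      (∫ x : V3, Dv tvec G (s₀, x)) s₀ := by
    intro s₀
    obtain ⟨b, hbi, hbd⟩ := dDtG.exists_bound (|s₀| + 1)
    have hmeas : ∀ᶠ s in nhds s₀, AEStronglyMeasurable (fun x : V3 => G (s, x))
        (volume : Measure V3) :=
      Filter.Eventually.of_forall fun s =>
        ((hGs.continuous.comp (Continuous.prodMk continuous_const continuous_id)).aestronglyMeasurable)
    have hint0 : Integrable (fun x : V3 => G (s₀, x)) := hGd.integrable hGs.continuous s₀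
    have h'meas : AEStronglyMeasurable (fun x : V3 => Dv tvec G (s₀, x))
        (volume : Measure V3) :=
      (((Dv_smooth hGs tvec).continuous.comp
        (Continuous.prodMk continuous_const continuous_id)).aestronglyMeasurable)
    have hbound : ∀ᵐ x : V3 ∂(volume : Measure V3), ∀ s ∈ Metric.ball s₀ 1,
        ‖Dv tvec G (s, x)‖ ≤ b x := by
      filter_upwards with x s hs
      have hd : |s - s₀| < 1 := by
        rw [Metric.mem_ball, Real.dist_eq] at hs
        exact hs
      have h1 : |s| ≤ |s₀| + 1 := by
        have := abs_sub_abs_le_abs_sub s s₀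
        linarith
      have hs' : s ∈ Set.Icc (-(|s₀| + 1)) (|s₀| + 1) := by
        constructor
        · linarith [neg_abs_le s, abs_le.mp h1]
        · linarith [le_abs_self s]
      rw [Real.norm_eq_abs]
      exact hbd s hs' x
    have hdiff : ∀ᵐ x : V3 ∂(volume : Measure V3), ∀ s ∈ Metric.ball s₀ 1,
        HasDerivAt (fun s' => G (s', x)) (Dv tvec G (s, x)) s :=
      Filter.Eventually.of_forall fun x s _ => hasDerivAt_slice hGs s x
    exact (hasDerivAt_integral_of_dominated_loc_of_deriv_le (Metric.ball_mem_nhds s₀ one_pos) hmeas hint0 h'meas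
      hbound hbi hdiff).2
  -- conclude
  have hdiffH : Differentiable ℝ (fun s => ∫ x : V3, G (s, x)) :=
    fun s => (hH s).differentiableAt
  have hderH : ∀ s, deriv (fun s => ∫ x : V3, G (s, x)) s = 0 := by
    intro s
    rw [(hH s).deriv, hJ0 s]
  have hconst : ∫ x : V3, G (t, x) = ∫ x : V3, G (0, x) :=
    is_const_of_deriv_eq_zero hdiffH hderH t 0
  have hGslice : ∀ (s : ℝ) (x : V3), dot (u s x) (vcurl (u s) x) = G (s, x) := by
    intro s x
    have h5 : ∀ i j : Fin 3, pd j (fun y => u s y i) x = Dv (sv j) (UU u i) (s, x) :=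
      fun i j => pd_slice (hUs i) j s x
    rw [hGdef]
    simp only [dot, vcurl, Fin.sum_univ_three, Matrix.cons_val_zero, Matrix.cons_val_one,
      Matrix.head_cons, Matrix.cons_val_two, Matrix.tail_cons, h5]
    rfl
  calc ∫ x : V3, dot (u t x) (vcurl (u t) x)
      = ∫ x : V3, G (t, x) := by
        rw [show (fun x : V3 => dot (u t x) (vcurl (u t) x)) = fun x : V3 => G (t, x) from
          funext fun x => hGslice t x]
    _ = ∫ x : V3, G (0, x) := hconst
    _ = ∫ x : V3, dot (u 0 x) (vcurl (u 0) x) := by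
        rw [show (fun x : V3 => dot (u 0 x) (vcurl (u 0) x)) = fun x : V3 => G (0, x) from
          funext fun x => hGslice 0 x]
end
end

section
/- Let ν ≥ 0 and let u : ℝ × ℝ³ → ℝ³ and p : ℝ × ℝ³ → ℝ be smooth, with u(t,·) divergence-free for every t, satisfying the incompressible Navier–Stokes equation ∂u/∂t = −(u·∇)u − ∇p + νΔu, where Δ is the componentwise Laplacian. Assume that for every t the functions u(t,·) and p(t,·) are Schwartz-class, uniformly on compact time intervals. Then the helicity ℋ_t = ∫_{ℝ³} ⟨u(t,x), (curl u(t,·))(x)⟩ dx is differentiable in t and d/dt ℋ_t = 2ν ∫_{ℝ³} ⟨(curl Δu(t,·))(x), u(t,x)⟩ dx. -/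
open MeasureTheory Matrix

noncomputable section

namespace NSHel

lemma norm_single_one (i : Fin 3) : ‖(Pi.single i 1 : V3)‖ = 1 := by
  rw [Pi.norm_single]; simp

lemma contDiff_pd {f : V3 → ℝ} (hf : ContDiff ℝ (⊤ : ℕ∞) f) (i : Fin 3) :
    ContDiff ℝ (⊤ : ℕ∞) (pd i f) := by
  have h1 : ContDiff ℝ (⊤ : ℕ∞) (fderiv ℝ f) := hf.fderiv_right (by simp)
  exact h1.clm_apply contDiff_const

lemma norm_iteratedFDeriv_pd_le {f : V3 → ℝ} (hf : ContDiff ℝ (⊤ : ℕ∞) f) (i : Fin 3)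
    (n : ℕ) (x : V3) :
    ‖iteratedFDeriv ℝ n (pd i f) x‖ ≤ ‖iteratedFDeriv ℝ (n + 1) f x‖ := by
  have hfd : ContDiff ℝ (⊤ : ℕ∞) (fderiv ℝ f) := hf.fderiv_right (by simp)
  set L : (V3 →L[ℝ] ℝ) →L[ℝ] ℝ := ContinuousLinearMap.apply ℝ ℝ (Pi.single i 1)
  have hL : ‖L‖ ≤ 1 := by
    apply ContinuousLinearMap.opNorm_le_bound _ zero_le_one
    intro φ
    calc ‖φ (Pi.single i 1)‖ ≤ ‖φ‖ * ‖(Pi.single i 1 : V3)‖ := φ.le_opNorm _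
    _ = 1 * ‖φ‖ := by rw [norm_single_one]; ring
  have hcomp : pd i f = L ∘ (fderiv ℝ f) := rfl
  rw [hcomp, L.iteratedFDeriv_comp_left hfd.contDiffAt (by exact_mod_cast le_top)]
  calc ‖L.compContinuousMultilinearMap (iteratedFDeriv ℝ n (fderiv ℝ f) x)‖
      ≤ ‖L‖ * ‖iteratedFDeriv ℝ n (fderiv ℝ f) x‖ :=
        ContinuousLinearMap.norm_compContinuousMultilinearMap_le _ _
    _ ≤ 1 * ‖iteratedFDeriv ℝ n (fderiv ℝ f) x‖ := by
        apply mul_le_mul_of_nonneg_right hL (norm_nonneg _)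
    _ = ‖iteratedFDeriv ℝ (n+1) f x‖ := by rw [one_mul, norm_iteratedFDeriv_fderiv]

/-- Uniform Schwartz-type decay for a family of scalar functions, over a parameter set `I`. -/
def UD (I : Set ℝ) (F : ℝ → V3 → ℝ) : Prop :=
  (∀ s ∈ I, ContDiff ℝ (⊤ : ℕ∞) (F s)) ∧
  ∀ k n : ℕ, ∃ C : ℝ, ∀ s ∈ I, ∀ x : V3, ‖x‖ ^ k * ‖iteratedFDeriv ℝ n (F s) x‖ ≤ C

namespace UD

variable {I : Set ℝ} {F G : ℝ → V3 → ℝ}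

lemma contDiff (hF : UD I F) {s : ℝ} (hs : s ∈ I) : ContDiff ℝ (⊤ : ℕ∞) (F s) := hF.1 s hs

lemma congr (hF : UD I F) (h : ∀ s ∈ I, ∀ x, F s x = G s x) : UD I G := by
  have he : ∀ s ∈ I, G s = F s := fun s hs => funext fun x => (h s hs x).symm
  refine ⟨fun s hs => ?_, fun k n => ?_⟩
  · rw [he s hs]; exact hF.1 s hs
  · obtain ⟨C, hC⟩ := hF.2 k n
    exact ⟨C, fun s hs x => by rw [he s hs]; exact hC s hs x⟩

lemma pd (hF : UD I F) (i : Fin 3) : UD I (fun s => pd i (F s)) := by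
  refine ⟨fun s hs => contDiff_pd (hF.1 s hs) i, fun k n => ?_⟩
  obtain ⟨C, hC⟩ := hF.2 k (n + 1)
  refine ⟨C, fun s hs x => ?_⟩
  calc ‖x‖ ^ k * ‖iteratedFDeriv ℝ n (_root_.pd i (F s)) x‖
      ≤ ‖x‖ ^ k * ‖iteratedFDeriv ℝ (n + 1) (F s) x‖ :=
        mul_le_mul_of_nonneg_left (norm_iteratedFDeriv_pd_le (hF.1 s hs) i n x)
          (pow_nonneg (norm_nonneg x) k)
    _ ≤ C := hC s hs x

lemma add (hF : UD I F) (hG : UD I G) : UD I (fun s x => F s x + G s x) := by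
  refine ⟨fun s hs => (hF.1 s hs).add (hG.1 s hs), fun k n => ?_⟩
  obtain ⟨C1, hC1⟩ := hF.2 k n
  obtain ⟨C2, hC2⟩ := hG.2 k n
  refine ⟨C1 + C2, fun s hs x => ?_⟩
  beta_reduce
  have he : (fun x => F s x + G s x) = F s + G s := rfl
  rw [he]
  have h1 : ContDiff ℝ n (F s) := (hF.1 s hs).of_le (by exact_mod_cast le_top)
  have h2 : ContDiff ℝ n (G s) := (hG.1 s hs).of_le (by exact_mod_cast le_top)
  calc ‖x‖ ^ k * ‖iteratedFDeriv ℝ n (F s + G s) x‖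
      = ‖x‖ ^ k * ‖iteratedFDeriv ℝ n (F s) x + iteratedFDeriv ℝ n (G s) x‖ := by
        rw [iteratedFDeriv_add_apply h1.contDiffAt h2.contDiffAt]
    _ ≤ ‖x‖ ^ k * (‖iteratedFDeriv ℝ n (F s) x‖ + ‖iteratedFDeriv ℝ n (G s) x‖) :=
        mul_le_mul_of_nonneg_left (norm_add_le _ _) (pow_nonneg (norm_nonneg x) k)
    _ = ‖x‖ ^ k * ‖iteratedFDeriv ℝ n (F s) x‖ + ‖x‖ ^ k * ‖iteratedFDeriv ℝ n (G s) x‖ := by ring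
    _ ≤ C1 + C2 := add_le_add (hC1 s hs x) (hC2 s hs x)

lemma neg (hF : UD I F) : UD I (fun s x => -(F s x)) := by
  refine ⟨fun s hs => (hF.1 s hs).neg, fun k n => ?_⟩
  obtain ⟨C, hC⟩ := hF.2 k n
  refine ⟨C, fun s hs x => ?_⟩
  beta_reduce
  have he : (fun x => -(F s x)) = -(F s) := rfl
  rw [he, iteratedFDeriv_neg_apply, norm_neg]
  exact hC s hs x

lemma sub (hF : UD I F) (hG : UD I G) : UD I (fun s x => F s x - G s x) := by
  have := hF.add hG.neg
  exact this.congr (fun s _ x => by ring)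

lemma const_mul (hF : UD I F) (c : ℝ) : UD I (fun s x => c * F s x) := by
  refine ⟨fun s hs => (hF.1 s hs).const_smul c, fun k n => ?_⟩
  obtain ⟨C, hC⟩ := hF.2 k n
  refine ⟨|c| * C, fun s hs x => ?_⟩
  beta_reduce
  have h1 : ContDiff ℝ n (F s) := (hF.1 s hs).of_le (by exact_mod_cast le_top)
  have he : (fun x => c * F s x) = c • (F s) := rfl
  rw [he, iteratedFDeriv_const_smul_apply h1.contDiffAt, norm_smul c (iteratedFDeriv ℝ n (F s) x), Real.norm_eq_abs]
  calc ‖x‖ ^ k * (|c| * ‖iteratedFDeriv ℝ n (F s) x‖)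
      = |c| * (‖x‖ ^ k * ‖iteratedFDeriv ℝ n (F s) x‖) := by ring
    _ ≤ |c| * C := mul_le_mul_of_nonneg_left (hC s hs x) (abs_nonneg c)

lemma mul (hF : UD I F) (hG : UD I G) : UD I (fun s x => F s x * G s x) := by
  refine ⟨fun s hs => (hF.1 s hs).mul (hG.1 s hs), fun k n => ?_⟩
  choose C1 hC1 using hF.2 k
  choose C2 hC2 using hG.2 0
  refine ⟨∑ i ∈ Finset.range (n + 1), (n.choose i : ℝ) * C1 i * C2 (n - i),
    fun s hs x => ?_⟩
  beta_reduce
  have hb := norm_iteratedFDeriv_mul_le (𝕜 := ℝ) (A := ℝ) (hF.1 s hs) (hG.1 s hs) x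
    (by exact_mod_cast le_top : (n : WithTop ℕ∞) ≤ ((⊤ : ℕ∞) : WithTop ℕ∞))
  calc ‖x‖ ^ k * ‖iteratedFDeriv ℝ n (fun y => F s y * G s y) x‖
      ≤ ‖x‖ ^ k * ∑ i ∈ Finset.range (n + 1), (n.choose i : ℝ) *
          ‖iteratedFDeriv ℝ i (F s) x‖ * ‖iteratedFDeriv ℝ (n - i) (G s) x‖ :=
        mul_le_mul_of_nonneg_left hb (pow_nonneg (norm_nonneg x) k)
    _ = ∑ i ∈ Finset.range (n + 1), (n.choose i : ℝ) *
          (‖x‖ ^ k * ‖iteratedFDeriv ℝ i (F s) x‖) * ‖iteratedFDeriv ℝ (n - i) (G s) x‖ := by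
        rw [Finset.mul_sum]; exact Finset.sum_congr rfl (fun i _ => by ring)
    _ ≤ ∑ i ∈ Finset.range (n + 1), (n.choose i : ℝ) * C1 i * C2 (n - i) := by
        refine Finset.sum_le_sum (fun i _ => ?_)
        have ha := hC1 i s hs x
        have hb2 : ‖iteratedFDeriv ℝ (n - i) (G s) x‖ ≤ C2 (n - i) := by
          have := hC2 (n - i) s hs x
          simpa using this
        have h1 : (n.choose i : ℝ) * (‖x‖ ^ k * ‖iteratedFDeriv ℝ i (F s) x‖) ≤
            (n.choose i : ℝ) * C1 i := mul_le_mul_of_nonneg_left ha (by positivity)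
        have hnn : 0 ≤ (n.choose i : ℝ) * C1 i := le_trans (by positivity) h1
        exact mul_le_mul h1 hb2 (norm_nonneg _) hnn

lemma exists_bound (hF : UD I F) :
    ∃ C : ℝ, 0 ≤ C ∧ ∀ s ∈ I, ∀ x : V3, ‖F s x‖ ≤ C * ((1 + ‖x‖) ^ 4)⁻¹ := by
  obtain ⟨C0, hC0⟩ := hF.2 0 0
  obtain ⟨C4, hC4⟩ := hF.2 4 0
  refine ⟨16 * (max C0 0 + max C4 0), by positivity, fun s hs x => ?_⟩
  have hpos : (0:ℝ) < (1 + ‖x‖) ^ 4 := by positivity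
  rw [le_mul_inv_iff₀ hpos]
  have h0 : ‖F s x‖ ≤ max C0 0 := by
    have := hC0 s hs x
    rw [pow_zero, one_mul, norm_iteratedFDeriv_zero] at this
    exact le_trans this (le_max_left _ _)
  have h4 : ‖x‖ ^ 4 * ‖F s x‖ ≤ max C4 0 := by
    have := hC4 s hs x
    rw [norm_iteratedFDeriv_zero] at this
    exact le_trans this (le_max_left _ _)
  have hxn : (0:ℝ) ≤ ‖x‖ := norm_nonneg x
  have hfn : (0:ℝ) ≤ ‖F s x‖ := norm_nonneg _
  nlinarith [sq_nonneg (‖x‖ - 1), sq_nonneg (‖x‖ ^ 2 - 1), sq_nonneg (‖x‖ ^ 2 - ‖x‖),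
    mul_nonneg (mul_nonneg hxn hxn) hfn, mul_nonneg hxn hfn,
    mul_nonneg (mul_nonneg (mul_nonneg hxn hxn) hxn) hfn,
    mul_nonneg (sq_nonneg (‖x‖ - 1)) hfn, mul_nonneg (sq_nonneg (‖x‖ ^ 2 - 1)) hfn,
    mul_nonneg (sq_nonneg (‖x‖ ^ 2 - ‖x‖)) hfn]

end UD

lemma integrable_decay_bound (C : ℝ) :
    Integrable (fun x : V3 => C * ((1 + ‖x‖) ^ 4)⁻¹) := by
  have h : Integrable (fun x : V3 => (1 + ‖x‖) ^ (-(4:ℝ))) := by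
    apply integrable_one_add_norm
    rw [Module.finrank_fintype_fun_eq_card]
    norm_num
  have h2 : Integrable (fun x : V3 => ((1 + ‖x‖) ^ 4)⁻¹) := by
    have he : (fun x : V3 => ((1 + ‖x‖) ^ 4)⁻¹) = fun x : V3 => (1 + ‖x‖) ^ (-(4:ℝ)) := by
      funext x
      have hp : (0:ℝ) < 1 + ‖x‖ := by positivity
      rw [Real.rpow_neg hp.le, ← Real.rpow_natCast (1 + ‖x‖) 4]
      norm_num
    rw [he]; exact h
  exact h2.const_mul C

lemma UD.integrable (hF : UD I F) {s : ℝ} (hs : s ∈ I) : Integrable (F s) := by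
  obtain ⟨C, _, hC⟩ := hF.exists_bound
  exact Integrable.mono' (integrable_decay_bound C)
    ((hF.1 s hs).continuous.aestronglyMeasurable)
    (Filter.Eventually.of_forall (fun x => hC s hs x))

/-- Schwartz-type decay for a single scalar function. -/
def Dc (f : V3 → ℝ) : Prop := UD Set.univ (fun _ => f)

lemma Dc.contDiff {f : V3 → ℝ} (hf : Dc f) : ContDiff ℝ (⊤ : ℕ∞) f := hf.1 0 trivial

lemma Dc.integrable {f : V3 → ℝ} (hf : Dc f) : Integrable f :=
  UD.integrable hf (Set.mem_univ 0)

lemma Dc.pd {f : V3 → ℝ} (hf : Dc f) (i : Fin 3) : Dc (pd i f) := UD.pd hf i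
lemma Dc.add {f g : V3 → ℝ} (hf : Dc f) (hg : Dc g) : Dc (fun x => f x + g x) := UD.add hf hg
lemma Dc.neg {f : V3 → ℝ} (hf : Dc f) : Dc (fun x => -(f x)) := UD.neg hf
lemma Dc.sub {f g : V3 → ℝ} (hf : Dc f) (hg : Dc g) : Dc (fun x => f x - g x) := UD.sub hf hg
lemma Dc.mul {f g : V3 → ℝ} (hf : Dc f) (hg : Dc g) : Dc (fun x => f x * g x) := UD.mul hf hg
lemma Dc.const_mul {f : V3 → ℝ} (hf : Dc f) (c : ℝ) : Dc (fun x => c * f x) := UD.const_mul hf c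
lemma Dc.congr {f g : V3 → ℝ} (hf : Dc f) (h : ∀ x, f x = g x) : Dc g :=
  UD.congr hf (fun _ _ x => h x)

lemma UD.dc (hF : UD I F) {s : ℝ} (hs : s ∈ I) : Dc (F s) := by
  refine ⟨fun _ _ => hF.1 s hs, fun k n => ?_⟩
  obtain ⟨C, hC⟩ := hF.2 k n
  exact ⟨C, fun _ _ x => hC s hs x⟩

section PtCalc

lemma Dct {E F : Type*} [NormedAddCommGroup E] [NormedSpace ℝ E] [NormedAddCommGroup F]
    [NormedSpace ℝ F] {f : E → F} (hf : ContDiff ℝ (⊤ : ℕ∞) f) {x : E} :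
    DifferentiableAt ℝ f x :=
  (hf.differentiable (by simp)).differentiableAt

lemma pd_add {f g : V3 → ℝ} {x : V3} (hf : DifferentiableAt ℝ f x)
    (hg : DifferentiableAt ℝ g x) (i : Fin 3) :
    pd i (fun y => f y + g y) x = pd i f x + pd i g x := by
  simp [pd, fderiv_fun_add hf hg]

lemma pd_neg {f : V3 → ℝ} {x : V3} (i : Fin 3) :
    pd i (fun y => -(f y)) x = -(pd i f x) := by
  simp [pd, fderiv_neg]

lemma pd_sub {f g : V3 → ℝ} {x : V3} (hf : DifferentiableAt ℝ f x)
    (hg : DifferentiableAt ℝ g x) (i : Fin 3) :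
    pd i (fun y => f y - g y) x = pd i f x - pd i g x := by
  simp [pd, fderiv_fun_sub hf hg]

lemma pd_const_mul {f : V3 → ℝ} {x : V3} (hf : DifferentiableAt ℝ f x) (c : ℝ) (i : Fin 3) :
    pd i (fun y => c * f y) x = c * pd i f x := by
  simp [pd, fderiv_const_mul hf c]

lemma pd_mul {f g : V3 → ℝ} {x : V3} (hf : DifferentiableAt ℝ f x)
    (hg : DifferentiableAt ℝ g x) (i : Fin 3) :
    pd i (fun y => f y * g y) x = pd i f x * g x + f x * pd i g x := by
  simp only [pd, fderiv_fun_mul hf hg, ContinuousLinearMap.add_apply,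
    ContinuousLinearMap.smul_apply, smul_eq_mul]
  ring

lemma pd_comm {f : V3 → ℝ} (hf : ContDiff ℝ (⊤ : ℕ∞) f) (i j : Fin 3) (x : V3) :
    pd i (pd j f) x = pd j (pd i f) x := by
  have hfd : ContDiff ℝ (⊤ : ℕ∞) (fderiv ℝ f) := hf.fderiv_right (by simp)
  have hder : ∀ (w : V3) (x : V3),
      fderiv ℝ (fun y => fderiv ℝ f y w) x = (fderiv ℝ (fderiv ℝ f) x).flip w := by
    intro w x
    rw [fderiv_clm_apply (Dct hfd) (differentiableAt_const w)]
    simp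
  have hsymm : IsSymmSndFDerivAt ℝ f x :=
    hf.contDiffAt.isSymmSndFDerivAt (by simp; exact WithTop.coe_le_coe.mpr le_top)
  show fderiv ℝ (fun y => fderiv ℝ f y (Pi.single j 1)) x (Pi.single i 1) = _
  rw [hder]
  show fderiv ℝ (fderiv ℝ f) x (Pi.single i 1) (Pi.single j 1) = _
  rw [hsymm (Pi.single i 1) (Pi.single j 1)]
  show fderiv ℝ (fderiv ℝ f) x (Pi.single j 1) (Pi.single i 1)
      = fderiv ℝ (fun y => fderiv ℝ f y (Pi.single i 1)) x (Pi.single j 1)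
  rw [hder]
  rfl

end PtCalc

section Joint

variable {g : ℝ × V3 → ℝ}

lemma hasFDerivAt_slice_t (hg : ContDiff ℝ (⊤ : ℕ∞) g) (s : ℝ) (x : V3) :
    HasFDerivAt (fun s' => g (s', x))
      ((fderiv ℝ g (s, x)).comp (ContinuousLinearMap.inl ℝ ℝ V3)) s := by
  have h := HasFDerivAt.comp s ((Dct hg).hasFDerivAt)
    (hasFDerivAt_prodMk_left (𝕜 := ℝ) s x)
  exact h

lemma hasDerivAt_slice (hg : ContDiff ℝ (⊤ : ℕ∞) g) (s : ℝ) (x : V3) :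
    HasDerivAt (fun s' => g (s', x)) (fderiv ℝ g (s, x) (1, 0)) s := by
  have h := (hasFDerivAt_slice_t hg s x).hasDerivAt
  simpa using h

lemma deriv_slice (hg : ContDiff ℝ (⊤ : ℕ∞) g) (s : ℝ) (x : V3) :
    deriv (fun s' => g (s', x)) s = fderiv ℝ g (s, x) (1, 0) :=
  (hasDerivAt_slice hg s x).deriv

lemma pd_slice (hg : ContDiff ℝ (⊤ : ℕ∞) g) (s : ℝ) (x : V3) (i : Fin 3) :
    pd i (fun y => g (s, y)) x = fderiv ℝ g (s, x) (0, Pi.single i 1) := by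
  have h : HasFDerivAt (fun y => g (s, y))
      ((fderiv ℝ g (s, x)).comp (ContinuousLinearMap.inr ℝ ℝ V3)) x := by
    have h := HasFDerivAt.comp x ((Dct hg).hasFDerivAt)
      (hasFDerivAt_prodMk_right (𝕜 := ℝ) s x)
    exact h
  rw [pd, h.fderiv]
  simp

lemma contDiff_fderiv_apply (hg : ContDiff ℝ (⊤ : ℕ∞) g) (w : ℝ × V3) :
    ContDiff ℝ (⊤ : ℕ∞) (fun q => fderiv ℝ g q w) :=
  (hg.fderiv_right (by simp)).clm_apply contDiff_const

lemma clairaut (hg : ContDiff ℝ (⊤ : ℕ∞) g) (a : Fin 3) (s : ℝ) (x : V3) :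
    HasDerivAt (fun s' => pd a (fun y => g (s', y)) x)
      (pd a (fun y => deriv (fun s' => g (s', y)) s) x) s := by
  have hfd : ContDiff ℝ (⊤ : ℕ∞) (fderiv ℝ g) := hg.fderiv_right (by simp)
  have hder : ∀ (w : ℝ × V3) (q : ℝ × V3),
      fderiv ℝ (fun q' => fderiv ℝ g q' w) q = (fderiv ℝ (fderiv ℝ g) q).flip w := by
    intro w q
    rw [fderiv_clm_apply (Dct hfd) (differentiableAt_const w)]
    simp
  set G₂ : ℝ × V3 → ℝ := fun q => fderiv ℝ g q (0, Pi.single a 1) with hG₂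
  set G₁ : ℝ × V3 → ℝ := fun q => fderiv ℝ g q (1, 0) with hG₁
  have hG₂s : ContDiff ℝ (⊤ : ℕ∞) G₂ := contDiff_fderiv_apply hg _
  have hG₁s : ContDiff ℝ (⊤ : ℕ∞) G₁ := contDiff_fderiv_apply hg _
  have hfun : (fun s' => pd a (fun y => g (s', y)) x) = fun s' => G₂ (s', x) := by
    funext s'
    exact pd_slice hg s' x a
  have hRHS : pd a (fun y => deriv (fun s' => g (s', y)) s) x = fderiv ℝ G₁ (s, x) (0, Pi.single a 1) := by
    have h1 : (fun y => deriv (fun s' => g (s', y)) s) = fun y => G₁ (s, y) := by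
      funext y
      exact deriv_slice hg s y
    rw [h1, pd_slice hG₁s s x a]
  have hmain := hasDerivAt_slice hG₂s s x
  rw [hfun, hRHS]
  have heq : fderiv ℝ G₂ (s, x) (1, 0) = fderiv ℝ G₁ (s, x) (0, Pi.single a 1) := by
    have hsymm : IsSymmSndFDerivAt ℝ g (s, x) :=
      hg.contDiffAt.isSymmSndFDerivAt (by simp; exact WithTop.coe_le_coe.mpr le_top)
    rw [hG₂, hG₁, hder, hder]
    show fderiv ℝ (fderiv ℝ g) (s, x) (1, 0) (0, Pi.single a 1)
        = fderiv ℝ (fderiv ℝ g) (s, x) (0, Pi.single a 1) (1, 0)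
    exact hsymm _ _
  rw [← heq]
  exact hmain

end Joint

section IBP

lemma int_pd_eq_zero {g : V3 → ℝ} (hg : Dc g) (i : Fin 3) : (∫ x : V3, pd i g x) = 0 := by
  have hd0 : ∀ x : V3, fderiv ℝ (fun _ : V3 => (1:ℝ)) x (Pi.single i 1) = 0 := by
    intro x; simp
  have hint1 : Integrable (fun x : V3 => fderiv ℝ (fun _ : V3 => (1:ℝ)) x (Pi.single i 1) * g x) := by
    simp only [hd0, zero_mul]
    exact integrable_zero _ _ _
  have hint2 : Integrable (fun x : V3 => (1:ℝ) * fderiv ℝ g x (Pi.single i 1)) := by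
    simp only [one_mul]
    exact (hg.pd i).integrable
  have hint3 : Integrable (fun x : V3 => (1:ℝ) * g x) := by
    simp only [one_mul]; exact hg.integrable
  have h := integral_mul_fderiv_eq_neg_fderiv_mul_of_integrable (μ := (volume : Measure V3))
      (f := fun _ : V3 => (1:ℝ)) (g := g) (v := Pi.single i 1)
      hint1 hint2 hint3 (fun x _ => differentiableAt_const 1) (fun x _ => Dct hg.contDiff)
  simp only [hd0, zero_mul, one_mul, integral_zero, neg_zero] at h
  exact h

lemma ibp_mul {f g : V3 → ℝ} (hf : Dc f) (hg : Dc g) (i : Fin 3) :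
    (∫ x : V3, pd i f x * g x) = - ∫ x : V3, f x * pd i g x := by
  have hL : (fun x => pd i f x * g x + f x * pd i g x) = pd i (fun y => f y * g y) :=
    funext fun x => (pd_mul (Dct hf.contDiff) (Dct hg.contDiff) i).symm
  have int1 : Integrable (fun x : V3 => pd i f x * g x) := ((hf.pd i).mul hg).integrable
  have int2 : Integrable (fun x : V3 => f x * pd i g x) := (hf.mul (hg.pd i)).integrable
  have hsum := integral_add int1 int2
  have h0 : (∫ x : V3, (pd i f x * g x + f x * pd i g x)) = 0 := by
    rw [show (fun x : V3 => pd i f x * g x + f x * pd i g x) = pd i (fun y => f y * g y) from hL]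
    exact int_pd_eq_zero (hf.mul hg) i
  rw [h0] at hsum
  linarith [hsum]

lemma int3_pd_zero {g0 g1 g2 : V3 → ℝ} (h0 : Dc g0) (h1 : Dc g1) (h2 : Dc g2) :
    (∫ x : V3, (pd 0 g0 x + pd 1 g1 x + pd 2 g2 x)) = 0 := by
  have ia : Integrable (fun x : V3 => pd 0 g0 x + pd 1 g1 x) :=
    (h0.pd 0).integrable.add (h1.pd 1).integrable
  have ib : Integrable (fun x : V3 => pd 2 g2 x) := (h2.pd 2).integrable
  have i0 : Integrable (fun x : V3 => pd 0 g0 x) := (h0.pd 0).integrable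
  have i1 : Integrable (fun x : V3 => pd 1 g1 x) := (h1.pd 1).integrable
  rw [integral_add ia ib, integral_add i0 i1,
    int_pd_eq_zero h0, int_pd_eq_zero h1, int_pd_eq_zero h2]
  ring

end IBP

section Vector

lemma dot3 (a b : V3) : dot a b = a 0 * b 0 + a 1 * b 1 + a 2 * b 2 := by
  simp [dot, Fin.sum_univ_three]

lemma dot_comm (a b : V3) : dot a b = dot b a := by
  simp [dot, mul_comm]

lemma vcurl0 (v : V3 → V3) (x : V3) :
    vcurl v x 0 = pd 1 (fun y => v y 2) x - pd 2 (fun y => v y 1) x := rfl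
lemma vcurl1 (v : V3 → V3) (x : V3) :
    vcurl v x 1 = pd 2 (fun y => v y 0) x - pd 0 (fun y => v y 2) x := rfl
lemma vcurl2 (v : V3 → V3) (x : V3) :
    vcurl v x 2 = pd 0 (fun y => v y 1) x - pd 1 (fun y => v y 0) x := rfl

/-- All three components have Schwartz-type decay. -/
def DcV (b : V3 → V3) : Prop := ∀ i, Dc (fun x => b x i)

lemma DcV.curl {b : V3 → V3} (hb : DcV b) : DcV (vcurl b) := by
  intro i
  fin_cases i
  · exact (((hb 2).pd 1).sub ((hb 1).pd 2)).congr (fun x => rfl)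
  · exact (((hb 0).pd 2).sub ((hb 2).pd 0)).congr (fun x => rfl)
  · exact (((hb 1).pd 0).sub ((hb 0).pd 1)).congr (fun x => rfl)

lemma DcV.lapl {b : V3 → V3} (hb : DcV b) : DcV (lapl b) := by
  intro i
  refine (((((hb i).pd 0).pd 0).add (((hb i).pd 1).pd 1)).add (((hb i).pd 2).pd 2)).congr
    (fun x => ?_)
  simp [_root_.lapl, Fin.sum_univ_three]

lemma DcV.covD {a : V3 → V3} (ha : DcV a) : DcV (covD a a) := by
  intro i
  refine ((((ha 0).mul ((ha i).pd 0)).add ((ha 1).mul ((ha i).pd 1))).add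
    ((ha 2).mul ((ha i).pd 2))).congr (fun x => ?_)
  simp [_root_.covD, Fin.sum_univ_three]

lemma DcV.dot {a b : V3 → V3} (ha : DcV a) (hb : DcV b) :
    Dc (fun x => dot (a x) (b x)) := by
  refine ((((ha 0).mul (hb 0)).add ((ha 1).mul (hb 1))).add ((ha 2).mul (hb 2))).congr
    (fun x => ?_)
  rw [dot3]

lemma vdiv_vcurl_eq_zero {b : V3 → V3} (hb : ∀ i, ContDiff ℝ (⊤ : ℕ∞) (fun x => b x i))
    (x : V3) : vdiv (vcurl b) x = 0 := by
  have hd : ∀ (i j : Fin 3), DifferentiableAt ℝ (pd i (fun y => b y j)) x :=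
    fun i j => Dct (contDiff_pd (hb j) i)
  show pd 0 (fun y => vcurl b y 0) x + pd 1 (fun y => vcurl b y 1) x
      + pd 2 (fun y => vcurl b y 2) x = 0
  have e0 : (fun y => vcurl b y 0)
      = fun y => pd 1 (fun z => b z 2) y - pd 2 (fun z => b z 1) y := rfl
  have e1 : (fun y => vcurl b y 1)
      = fun y => pd 2 (fun z => b z 0) y - pd 0 (fun z => b z 2) y := rfl
  have e2 : (fun y => vcurl b y 2)
      = fun y => pd 0 (fun z => b z 1) y - pd 1 (fun z => b z 0) y := rfl
  rw [e0, e1, e2, pd_sub (hd 1 2) (hd 2 1) 0, pd_sub (hd 2 0) (hd 0 2) 1,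
    pd_sub (hd 0 1) (hd 1 0) 2,
    pd_comm (hb 2) 1 0, pd_comm (hb 1) 2 0, pd_comm (hb 0) 2 1]
  ring

lemma int_dot_curl_symm {a b : V3 → V3} (ha : DcV a) (hb : DcV b) :
    (∫ x : V3, dot (a x) (vcurl b x)) = ∫ x : V3, dot (vcurl a x) (b x) := by
  set c0 : V3 → ℝ := fun x => a x 1 * b x 2 - a x 2 * b x 1 with hc0def
  set c1 : V3 → ℝ := fun x => a x 2 * b x 0 - a x 0 * b x 2 with hc1def
  set c2 : V3 → ℝ := fun x => a x 0 * b x 1 - a x 1 * b x 0 with hc2def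
  have hc0 : Dc c0 := ((ha 1).mul (hb 2)).sub ((ha 2).mul (hb 1))
  have hc1 : Dc c1 := ((ha 2).mul (hb 0)).sub ((ha 0).mul (hb 2))
  have hc2 : Dc c2 := ((ha 0).mul (hb 1)).sub ((ha 1).mul (hb 0))
  have hda : ∀ i, Differentiable ℝ (fun x : V3 => a x i) := fun i x => Dct (ha i).contDiff
  have hdb : ∀ i, Differentiable ℝ (fun x : V3 => b x i) := fun i x => Dct (hb i).contDiff
  have hptw : ∀ x : V3, dot (a x) (vcurl b x)
      = dot (vcurl a x) (b x) - (pd 0 c0 x + pd 1 c1 x + pd 2 c2 x) := by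
    intro x
    have h0 : pd 0 c0 x = pd 0 (fun y => a y 1) x * b x 2 + a x 1 * pd 0 (fun y => b y 2) x
        - (pd 0 (fun y => a y 2) x * b x 1 + a x 2 * pd 0 (fun y => b y 1) x) := by
      rw [hc0def, pd_sub (((hda 1).fun_mul (hdb 2)) x) (((hda 2).fun_mul (hdb 1)) x) 0,
        pd_mul (hda 1 x) (hdb 2 x) 0, pd_mul (hda 2 x) (hdb 1 x) 0]
    have h1 : pd 1 c1 x = pd 1 (fun y => a y 2) x * b x 0 + a x 2 * pd 1 (fun y => b y 0) x
        - (pd 1 (fun y => a y 0) x * b x 2 + a x 0 * pd 1 (fun y => b y 2) x) := by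
      rw [hc1def, pd_sub (((hda 2).fun_mul (hdb 0)) x) (((hda 0).fun_mul (hdb 2)) x) 1,
        pd_mul (hda 2 x) (hdb 0 x) 1, pd_mul (hda 0 x) (hdb 2 x) 1]
    have h2 : pd 2 c2 x = pd 2 (fun y => a y 0) x * b x 1 + a x 0 * pd 2 (fun y => b y 1) x
        - (pd 2 (fun y => a y 1) x * b x 0 + a x 1 * pd 2 (fun y => b y 0) x) := by
      rw [hc2def, pd_sub (((hda 0).fun_mul (hdb 1)) x) (((hda 1).fun_mul (hdb 0)) x) 2,
        pd_mul (hda 0 x) (hdb 1 x) 2, pd_mul (hda 1 x) (hdb 0 x) 2]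
    rw [dot3, dot3, vcurl0, vcurl1, vcurl2, vcurl0, vcurl1, vcurl2, h0, h1, h2]
    ring
  rw [integral_congr_ae (Filter.Eventually.of_forall hptw)]
  have hint1 : Integrable (fun x : V3 => dot (vcurl a x) (b x)) := (ha.curl.dot hb).integrable
  have hint2 : Integrable (fun x : V3 => pd 0 c0 x + pd 1 c1 x + pd 2 c2 x) :=
    ((hc0.pd 0).integrable.add (hc1.pd 1).integrable).add (hc2.pd 2).integrable
  rw [integral_sub hint1 hint2, int3_pd_zero hc0 hc1 hc2, sub_zero]

lemma int_dot_grad_curl {f : V3 → ℝ} {b : V3 → V3} (hf : Dc f) (hb : DcV b) :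
    (∫ x : V3, dot (grad f x) (vcurl b x)) = 0 := by
  set g0 : V3 → ℝ := fun x => f x * vcurl b x 0 with hg0def
  set g1 : V3 → ℝ := fun x => f x * vcurl b x 1 with hg1def
  set g2 : V3 → ℝ := fun x => f x * vcurl b x 2 with hg2def
  have hω : DcV (vcurl b) := hb.curl
  have hg0 : Dc g0 := hf.mul (hω 0)
  have hg1 : Dc g1 := hf.mul (hω 1)
  have hg2 : Dc g2 := hf.mul (hω 2)
  have hdf : ∀ x, DifferentiableAt ℝ f x := fun x => Dct hf.contDiff
  have hdω : ∀ i, ∀ x : V3, DifferentiableAt ℝ (fun y => vcurl b y i) x :=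
    fun i x => Dct (hω i).contDiff
  have hptw : ∀ x : V3, dot (grad f x) (vcurl b x) = pd 0 g0 x + pd 1 g1 x + pd 2 g2 x := by
    intro x
    have hdiv : pd 0 (fun y => vcurl b y 0) x + pd 1 (fun y => vcurl b y 1) x
        + pd 2 (fun y => vcurl b y 2) x = 0 :=
      vdiv_vcurl_eq_zero (fun i => (hb i).contDiff) x
    rw [hg0def, hg1def, hg2def, pd_mul (hdf x) (hdω 0 x) 0, pd_mul (hdf x) (hdω 1 x) 1,
      pd_mul (hdf x) (hdω 2 x) 2, dot3]
    show pd 0 f x * vcurl b x 0 + pd 1 f x * vcurl b x 1 + pd 2 f x * vcurl b x 2 = _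
    linear_combination (-(f x)) * hdiv
  rw [integral_congr_ae (Filter.Eventually.of_forall hptw)]
  exact int3_pd_zero hg0 hg1 hg2

lemma key_identity {a W : V3 → V3} {q : V3 → ℝ} (ν : ℝ) (ha : DcV a) (hW : DcV W)
    (hq : Dc q) (hWeq : ∀ x, W x = -(covD a a x) - grad q x + ν • lapl a x) :
    (∫ x : V3, (dot (W x) (vcurl a x) + dot (a x) (vcurl W x)))
      = 2 * ν * ∫ x : V3, dot (vcurl (lapl a) x) (a x) := by
  have hω : DcV (vcurl a) := ha.curl
  have hlap : DcV (lapl a) := ha.lapl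
  have hcov : DcV (covD a a) := ha.covD
  have hgq : DcV (grad q) := fun i => (hq.pd i).congr (fun x => rfl)
  -- split the integral
  have hintA : Integrable (fun x : V3 => dot (W x) (vcurl a x)) := (hW.dot hω).integrable
  have hintB : Integrable (fun x : V3 => dot (a x) (vcurl W x)) := (ha.dot hW.curl).integrable
  rw [integral_add hintA hintB]
  -- second piece equals the first by integration by parts
  have hB : (∫ x : V3, dot (a x) (vcurl W x)) = ∫ x : V3, dot (W x) (vcurl a x) := by
    rw [int_dot_curl_symm ha hW]
    exact integral_congr_ae (Filter.Eventually.of_forall (fun x => dot_comm _ _))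
  rw [hB]
  -- compute the first piece
  have hptw : ∀ x : V3, dot (W x) (vcurl a x)
      = -(dot (covD a a x) (vcurl a x)) - dot (grad q x) (vcurl a x)
        + ν * dot (lapl a x) (vcurl a x) := by
    intro x
    rw [hWeq x, dot3, dot3, dot3, dot3]
    simp only [Pi.add_apply, Pi.sub_apply, Pi.neg_apply, Pi.smul_apply, smul_eq_mul]
    ring
  have hintC : Integrable (fun x : V3 => dot (covD a a x) (vcurl a x)) :=
    (hcov.dot hω).integrable
  have hintD : Integrable (fun x : V3 => dot (grad q x) (vcurl a x)) :=
    (hgq.dot hω).integrable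
  have hintE : Integrable (fun x : V3 => dot (lapl a x) (vcurl a x)) :=
    (hlap.dot hω).integrable
  have hsplit : (∫ x : V3, dot (W x) (vcurl a x))
      = -(∫ x : V3, dot (covD a a x) (vcurl a x)) - (∫ x : V3, dot (grad q x) (vcurl a x))
        + ν * ∫ x : V3, dot (lapl a x) (vcurl a x) := by
    rw [integral_congr_ae (Filter.Eventually.of_forall hptw)]
    have hi1 : Integrable (fun x : V3 =>
        -dot (covD a a x) (vcurl a x) - dot (grad q x) (vcurl a x)) := (hintC.neg).sub hintD
    have hi2 : Integrable (fun x : V3 => ν * dot (lapl a x) (vcurl a x)) := hintE.const_mul ν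
    have hi3 : Integrable (fun x : V3 => -dot (covD a a x) (vcurl a x)) := hintC.neg
    rw [integral_add hi1 hi2, integral_sub hi3 hintD, integral_neg, integral_const_mul]
  -- the pressure term vanishes
  have hD : (∫ x : V3, dot (grad q x) (vcurl a x)) = 0 := int_dot_grad_curl hq ha
  -- the transport term vanishes
  have hC : (∫ x : V3, dot (covD a a x) (vcurl a x)) = 0 := by
    set h : V3 → ℝ := fun x => (1/2) * (a x 0 * a x 0 + a x 1 * a x 1 + a x 2 * a x 2)
      with hhdef
    have hh : Dc h := (((((ha 0).mul (ha 0)).add ((ha 1).mul (ha 1))).add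
      ((ha 2).mul (ha 2))).const_mul (1/2))
    have hda : ∀ i, Differentiable ℝ (fun x : V3 => a x i) := fun i x => Dct (ha i).contDiff
    have hcovptw : ∀ x : V3, dot (covD a a x) (vcurl a x) = dot (grad h x) (vcurl a x) := by
      intro x
      have hgradh : ∀ i : Fin 3, grad h x i
          = a x 0 * pd i (fun y => a y 0) x + a x 1 * pd i (fun y => a y 1) x
            + a x 2 * pd i (fun y => a y 2) x := by
        intro i
        show pd i h x = _
        rw [hhdef, pd_const_mul (((((hda 0).fun_mul (hda 0)).fun_add ((hda 1).fun_mul (hda 1))).fun_add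
            ((hda 2).fun_mul (hda 2))) x) (1/2) i,
          pd_add ((((hda 0).fun_mul (hda 0)).fun_add ((hda 1).fun_mul (hda 1))) x) (((hda 2).fun_mul (hda 2)) x) i,
          pd_add (((hda 0).fun_mul (hda 0)) x) (((hda 1).fun_mul (hda 1)) x) i,
          pd_mul (hda 0 x) (hda 0 x) i, pd_mul (hda 1 x) (hda 1 x) i,
          pd_mul (hda 2 x) (hda 2 x) i]
        ring
      have hcovc : ∀ i : Fin 3, covD a a x i
          = a x 0 * pd 0 (fun y => a y i) x + a x 1 * pd 1 (fun y => a y i) x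
            + a x 2 * pd 2 (fun y => a y i) x := by
        intro i
        simp [covD, Fin.sum_univ_three]
      rw [dot3, dot3, hgradh 0, hgradh 1, hgradh 2, hcovc 0, hcovc 1, hcovc 2,
        vcurl0, vcurl1, vcurl2]
      ring
    rw [integral_congr_ae (Filter.Eventually.of_forall hcovptw)]
    exact int_dot_grad_curl hh ha
  -- the viscosity term
  have hE : (∫ x : V3, dot (lapl a x) (vcurl a x)) = ∫ x : V3, dot (vcurl (lapl a) x) (a x) :=
    int_dot_curl_symm hlap ha
  rw [hsplit, hC, hD, hE]
  ring

lemma norm_iteratedFDeriv_proj_le {v : V3 → V3} (hv : ContDiff ℝ (⊤ : ℕ∞) v) (j : Fin 3)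
    (n : ℕ) (x : V3) :
    ‖iteratedFDeriv ℝ n (fun y => v y j) x‖ ≤ ‖iteratedFDeriv ℝ n v x‖ := by
  set L : V3 →L[ℝ] ℝ := ContinuousLinearMap.proj j
  have hL : ‖L‖ ≤ 1 := by
    apply ContinuousLinearMap.opNorm_le_bound _ zero_le_one
    intro w
    rw [one_mul]
    exact norm_le_pi_norm w j
  have hcomp : (fun y => v y j) = L ∘ v := rfl
  rw [hcomp, L.iteratedFDeriv_comp_left hv.contDiffAt (by exact_mod_cast le_top)]
  calc ‖L.compContinuousMultilinearMap (iteratedFDeriv ℝ n v x)‖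
      ≤ ‖L‖ * ‖iteratedFDeriv ℝ n v x‖ :=
        ContinuousLinearMap.norm_compContinuousMultilinearMap_le _ _
    _ ≤ 1 * ‖iteratedFDeriv ℝ n v x‖ := mul_le_mul_of_nonneg_right hL (norm_nonneg _)
    _ = _ := one_mul _

end Vector

end NSHel

open NSHel

theorem navier_stokes_helicity_derivative (ν : ℝ) (hν : 0 ≤ ν)
    (u : ℝ → V3 → V3) (p : ℝ → V3 → ℝ)
    (hu : ContDiff ℝ (⊤ : ℕ∞) fun q : ℝ × V3 => u q.1 q.2)
    (hp : ContDiff ℝ (⊤ : ℕ∞) fun q : ℝ × V3 => p q.1 q.2)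
    (hdiv : ∀ t x, vdiv (u t) x = 0)
    (hns : ∀ t x, dtv u t x = -(covD (u t) (u t) x) - grad (p t) x + ν • lapl (u t) x)
    (hudecay : ∀ (R : ℝ) (k n : ℕ), ∃ C : ℝ, ∀ t ∈ Set.Icc (-R) R, ∀ x : V3,
      ‖x‖ ^ k * ‖iteratedFDeriv ℝ n (u t) x‖ ≤ C)
    (hpdecay : ∀ (R : ℝ) (k n : ℕ), ∃ C : ℝ, ∀ t ∈ Set.Icc (-R) R, ∀ x : V3,
      ‖x‖ ^ k * ‖iteratedFDeriv ℝ n (p t) x‖ ≤ C)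
    (t : ℝ) :
    HasDerivAt (fun s => ∫ x : V3, dot (u s x) (vcurl (u s) x))
      (2 * ν * ∫ x : V3, dot (vcurl (lapl (u t)) x) (u t x)) t := by
  have hu' : ContDiff ℝ (⊤ : ℕ∞) fun q : ℝ × V3 => u q.1 q.2 := hu.of_le (by simp)
  have hp' : ContDiff ℝ (⊤ : ℕ∞) fun q : ℝ × V3 => p q.1 q.2 := hp.of_le (by simp)
  have hgi : ∀ i : Fin 3, ContDiff ℝ (⊤ : ℕ∞) (fun q : ℝ × V3 => u q.1 q.2 i) :=
    fun i => contDiff_pi.1 hu' i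
  have hus : ∀ s, ContDiff ℝ (⊤ : ℕ∞) (u s) :=
    fun s => hu'.comp (contDiff_const.prodMk contDiff_id)
  have hps : ∀ s, ContDiff ℝ (⊤ : ℕ∞) (p s) :=
    fun s => hp'.comp (contDiff_const.prodMk contDiff_id)
  set R : ℝ := |t| + 1 with hRdef
  set I : Set ℝ := Set.Icc (-R) R with hIdef
  have htI : t ∈ I := by
    constructor <;> [linarith [neg_abs_le t]; linarith [le_abs_self t]]
  have hball : Metric.ball t 1 ⊆ I := by
    intro s hs
    rw [Metric.mem_ball, Real.dist_eq] at hs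
    have h1 := abs_sub_abs_le_abs_sub s t
    have h2 := neg_abs_le s
    have h3 := le_abs_self s
    constructor <;> simp only [hIdef, hRdef] <;> linarith [abs_nonneg (s - t)]
  -- uniform decay of the velocity components
  have hU : ∀ j : Fin 3, UD I (fun s x => u s x j) := by
    intro j
    refine ⟨fun s _ => contDiff_pi.1 (hus s) j, fun k n => ?_⟩
    obtain ⟨C, hC⟩ := hudecay R k n
    refine ⟨C, fun s hs x => ?_⟩
    beta_reduce
    calc ‖x‖ ^ k * ‖iteratedFDeriv ℝ n (fun y => u s y j) x‖
        ≤ ‖x‖ ^ k * ‖iteratedFDeriv ℝ n (u s) x‖ :=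
          mul_le_mul_of_nonneg_left (norm_iteratedFDeriv_proj_le (hus s) j n x)
            (pow_nonneg (norm_nonneg x) k)
      _ ≤ C := hC s hs x
  -- uniform decay of the pressure
  have hP : UD I (fun s x => p s x) := by
    refine ⟨fun s _ => hps s, fun k n => ?_⟩
    obtain ⟨C, hC⟩ := hpdecay R k n
    exact ⟨C, fun s hs x => hC s hs x⟩
  -- uniform decay of the time derivative components, via the equation
  have hW : ∀ i : Fin 3, UD I (fun s x => dtv u s x i) := by
    intro i
    have hE : UD I (fun s x =>
        -(u s x 0 * pd 0 (fun y => u s y i) x + u s x 1 * pd 1 (fun y => u s y i) x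
          + u s x 2 * pd 2 (fun y => u s y i) x)
        - pd i (fun y => p s y) x
        + ν * (pd 0 (pd 0 (fun y => u s y i)) x + pd 1 (pd 1 (fun y => u s y i)) x
          + pd 2 (pd 2 (fun y => u s y i)) x)) := by
      have h1 : UD I (fun s x => u s x 0 * pd 0 (fun y => u s y i) x
          + u s x 1 * pd 1 (fun y => u s y i) x + u s x 2 * pd 2 (fun y => u s y i) x) :=
        (((hU 0).mul ((hU i).pd 0)).add ((hU 1).mul ((hU i).pd 1))).add
          ((hU 2).mul ((hU i).pd 2))
      have h2 : UD I (fun s x => pd i (fun y => p s y) x) := hP.pd i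
      have h3 : UD I (fun s x => pd 0 (pd 0 (fun y => u s y i)) x
          + pd 1 (pd 1 (fun y => u s y i)) x + pd 2 (pd 2 (fun y => u s y i)) x) :=
        ((((hU i).pd 0).pd 0).add (((hU i).pd 1).pd 1)).add (((hU i).pd 2).pd 2)
      exact (h1.neg.sub h2).add (h3.const_mul ν)
    refine hE.congr (fun s _ x => ?_)
    have h := congrFun (hns s x) i
    rw [h]
    simp only [Pi.add_apply, Pi.sub_apply, Pi.neg_apply, Pi.smul_apply, smul_eq_mul,
      covD, grad, lapl, Fin.sum_univ_three]
  -- uniform decay of the helicity integrand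
  have hF : UD I (fun s x => dot (u s x) (vcurl (u s) x)) := by
    have hE : UD I (fun s x =>
        u s x 0 * (pd 1 (fun y => u s y 2) x - pd 2 (fun y => u s y 1) x)
        + u s x 1 * (pd 2 (fun y => u s y 0) x - pd 0 (fun y => u s y 2) x)
        + u s x 2 * (pd 0 (fun y => u s y 1) x - pd 1 (fun y => u s y 0) x)) :=
      (((hU 0).mul (((hU 2).pd 1).sub ((hU 1).pd 2))).add
        ((hU 1).mul (((hU 0).pd 2).sub ((hU 2).pd 0)))).add
        ((hU 2).mul (((hU 1).pd 0).sub ((hU 0).pd 1)))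
    refine hE.congr (fun s _ x => ?_)
    rw [dot3, vcurl0, vcurl1, vcurl2]
  -- the s-derivative of the integrand
  set G : ℝ → V3 → ℝ := fun s x =>
    dot (dtv u s x) (vcurl (u s) x) + dot (u s x) (vcurl (dtv u s) x) with hGdef
  have hG : UD I G := by
    have hE : UD I (fun s x =>
        (dtv u s x 0 * (pd 1 (fun y => u s y 2) x - pd 2 (fun y => u s y 1) x)
        + dtv u s x 1 * (pd 2 (fun y => u s y 0) x - pd 0 (fun y => u s y 2) x)
        + dtv u s x 2 * (pd 0 (fun y => u s y 1) x - pd 1 (fun y => u s y 0) x))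
        + (u s x 0 * (pd 1 (fun y => dtv u s y 2) x - pd 2 (fun y => dtv u s y 1) x)
        + u s x 1 * (pd 2 (fun y => dtv u s y 0) x - pd 0 (fun y => dtv u s y 2) x)
        + u s x 2 * (pd 0 (fun y => dtv u s y 1) x - pd 1 (fun y => dtv u s y 0) x))) := by
      have hA : UD I (fun s x =>
          dtv u s x 0 * (pd 1 (fun y => u s y 2) x - pd 2 (fun y => u s y 1) x)
          + dtv u s x 1 * (pd 2 (fun y => u s y 0) x - pd 0 (fun y => u s y 2) x)
          + dtv u s x 2 * (pd 0 (fun y => u s y 1) x - pd 1 (fun y => u s y 0) x)) :=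
        (((hW 0).mul (((hU 2).pd 1).sub ((hU 1).pd 2))).add
          ((hW 1).mul (((hU 0).pd 2).sub ((hU 2).pd 0)))).add
          ((hW 2).mul (((hU 1).pd 0).sub ((hU 0).pd 1)))
      have hB : UD I (fun s x =>
          u s x 0 * (pd 1 (fun y => dtv u s y 2) x - pd 2 (fun y => dtv u s y 1) x)
          + u s x 1 * (pd 2 (fun y => dtv u s y 0) x - pd 0 (fun y => dtv u s y 2) x)
          + u s x 2 * (pd 0 (fun y => dtv u s y 1) x - pd 1 (fun y => dtv u s y 0) x)) :=
        (((hU 0).mul (((hW 2).pd 1).sub ((hW 1).pd 2))).add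
          ((hU 1).mul (((hW 0).pd 2).sub ((hW 2).pd 0)))).add
          ((hU 2).mul (((hW 1).pd 0).sub ((hW 0).pd 1)))
      exact hA.add hB
    refine hE.congr (fun s _ x => ?_)
    rw [hGdef]
    beta_reduce
    rw [dot3, dot3, vcurl0, vcurl1, vcurl2, vcurl0, vcurl1, vcurl2]
  -- prepare the dominated-convergence argument
  obtain ⟨C, hC0, hCb⟩ := hG.exists_bound
  have hFmeas : ∀ᶠ s in nhds t, AEStronglyMeasurable
      (fun x : V3 => dot (u s x) (vcurl (u s) x)) volume := by
    refine Filter.eventually_of_mem (Metric.ball_mem_nhds t one_pos) (fun s hs => ?_)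
    exact ((hF.contDiff (hball hs)).continuous).aestronglyMeasurable
  have hFint : Integrable (fun x : V3 => dot (u t x) (vcurl (u t) x)) := hF.integrable htI
  have hGmeas : AEStronglyMeasurable (G t) volume :=
    ((hG.contDiff htI).continuous).aestronglyMeasurable
  have hbound : ∀ᵐ x : V3 ∂volume, ∀ s ∈ Metric.ball t 1,
      ‖G s x‖ ≤ C * ((1 + ‖x‖) ^ 4)⁻¹ :=
    Filter.Eventually.of_forall (fun x s hs => hCb s (hball hs) x)
  have hbint : Integrable (fun x : V3 => C * ((1 + ‖x‖) ^ 4)⁻¹) := integrable_decay_bound C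
  have hdiff : ∀ᵐ x : V3 ∂volume, ∀ s ∈ Metric.ball t 1,
      HasDerivAt (fun s' => dot (u s' x) (vcurl (u s') x)) (G s x) s := by
    refine Filter.Eventually.of_forall (fun x s _ => ?_)
    have hA : ∀ i : Fin 3, HasDerivAt (fun s' => u s' x i) (dtv u s x i) s := by
      intro i
      have h := hasDerivAt_slice (hgi i) s x
      have he : dtv u s x i = fderiv ℝ (fun q : ℝ × V3 => u q.1 q.2 i) (s, x) (1, 0) :=
        deriv_slice (hgi i) s x
      rw [he]
      exact h
    have hB : ∀ a b : Fin 3, HasDerivAt (fun s' => pd a (fun y => u s' y b) x)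
        (pd a (fun y => dtv u s y b) x) s := fun a b => clairaut (hgi b) a s x
    have hω0 : HasDerivAt (fun s' => vcurl (u s') x 0)
        (pd 1 (fun y => dtv u s y 2) x - pd 2 (fun y => dtv u s y 1) x) s :=
      (hB 1 2).sub (hB 2 1)
    have hω1 : HasDerivAt (fun s' => vcurl (u s') x 1)
        (pd 2 (fun y => dtv u s y 0) x - pd 0 (fun y => dtv u s y 2) x) s :=
      (hB 2 0).sub (hB 0 2)
    have hω2 : HasDerivAt (fun s' => vcurl (u s') x 2)
        (pd 0 (fun y => dtv u s y 1) x - pd 1 (fun y => dtv u s y 0) x) s :=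
      (hB 0 1).sub (hB 1 0)
    have hbig := (((hA 0).fun_mul hω0).fun_add ((hA 1).fun_mul hω1)).fun_add ((hA 2).fun_mul hω2)
    have hfg : (fun s' => dot (u s' x) (vcurl (u s') x))
        = fun s' => u s' x 0 * vcurl (u s') x 0 + u s' x 1 * vcurl (u s') x 1
          + u s' x 2 * vcurl (u s') x 2 := funext (fun s' => dot3 _ _)
    rw [hfg]
    refine hbig.congr_deriv ?_
    rw [hGdef]
    beta_reduce
    rw [dot3, dot3, vcurl0, vcurl1, vcurl2, vcurl0, vcurl1, vcurl2]
    ring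
  have hmain := (hasDerivAt_integral_of_dominated_loc_of_deriv_le (Metric.ball_mem_nhds t one_pos) hFmeas hFint
    hGmeas hbound hbint hdiff).2
  -- identify the value of the derivative
  have haDc : DcV (u t) := fun i => (hU i).dc htI
  have hWDc : DcV (dtv u t) := fun i => (hW i).dc htI
  have hqDc : Dc (p t) := hP.dc htI
  have hkey : (∫ x : V3, G t x) = 2 * ν * ∫ x : V3, dot (vcurl (lapl (u t)) x) (u t x) :=
    key_identity ν haDc hWDc hqDc (hns t)
  rw [hkey] at hmain
  exact hmain
end
end
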